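/- arXiv:2106.02262 — 5 statements merged into one kernel-verified Lean document; each statement's English description precedes it below -/
import Mathlib

section
/- Let n and q be positive integers and let a_1,…,a_q be nonnegative real numbers with Σ_{j=1}^q a_j = n−1. Let H be a bipartite graph with parts [n−1] and [q] and nonnegative edge weights (w_e)_{e∈E(H)} such that Σ_{e ∋ i} w_e = 1 for every i ∈ [n−1] and Σ_{e ∋ j} w_e = a_j for every j ∈ [q]. Then for every j* ∈ [q] there exists an assignment π : [n] → [q] such that: π(n) = j*; for every i ∈ [n−1], {i, π(i)} is an edge of H; |π⁻¹(j*)| = ⌊a_{j*}⌋ + 1; and for every j ∈ [q] with j ≠ j*, |π⁻¹(j)| ∈ {⌊a_j⌋, ⌈a_j⌉}. -/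
/-!
Round the fractional assignment `w` by Hall's theorem. Column `j` gets `u j` slots, where
`u j* = ⌊a j*⌋` and `u j = ⌈a j⌉` otherwise. A set `S` of rows sends all its mass into its
neighbourhood `N(S)`, so `|S| ≤ ∑_{N(S)} a j < ∑_{N(S)} u j + 1`, which is Hall's condition for
the slots. To force at least `⌊a j⌋` rows into every column, add `∑ u - (n - 1)` dummy rows that
may only take the slots of column `j` numbered `≥ ⌊a j⌋`: a perfect matching then leaves the
first `⌊a j⌋` slots of each column to genuine rows. Finally the vertex `n` is sent to `j*`.
-/

open Finset

section HallWithBounds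

variable {ι κ : Type*} [Fintype κ] (R : ι → κ → Prop) [DecidableRel R]

def nbhd (S : Finset ι) : Finset κ := {j | ∃ i ∈ S, R i j}

variable {R} in
lemma mem_nbhd {S : Finset ι} {j : κ} : j ∈ nbhd R S ↔ ∃ i ∈ S, R i j := by
  simp [nbhd]

variable (u l : κ → ℕ)

def slots : Finset (Σ _ : κ, ℕ) := univ.sigma fun j => range (u j)

def slotFamily (D : ℕ) : ι ⊕ Fin D → Finset (Σ _ : κ, ℕ) :=
  Sum.elim (fun i => (univ.filter (R i)).sigma fun j => range (u j))
    (fun _ => univ.sigma fun j => Ico (l j) (u j))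

lemma slotFamily_subset_slots {D : ℕ} (x : ι ⊕ Fin D) : slotFamily R u l D x ⊆ slots u := by
  intro s hs
  cases x <;> simp_all [slotFamily, slots]

variable [Fintype ι] {u l}

lemma card_le_sum_of_forall_card_le_sum_nbhd (hup : ∀ S : Finset ι, #S ≤ ∑ j ∈ nbhd R S, u j) :
    Fintype.card ι ≤ ∑ j, u j :=
  (hup univ).trans (sum_le_sum_of_subset (subset_univ _))

variable [DecidableEq κ]

lemma card_le_card_biUnion_slotFamily (hlu : l ≤ u)
    (hup : ∀ S : Finset ι, #S ≤ ∑ j ∈ nbhd R S, u j)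
    (hlow : ∀ S : Finset ι, #S + ∑ j ∈ (nbhd R S)ᶜ, l j ≤ Fintype.card ι)
    (S : Finset (ι ⊕ Fin (∑ j, u j - Fintype.card ι))) :
    #S ≤ #(S.biUnion (slotFamily R u l _)) := by
  set N := nbhd R S.toLeft
  have hS := card_toLeft_add_card_toRight (u := S)
  have hN : N.sigma (fun j => range (u j)) ⊆ S.biUnion (slotFamily R u l _) := by
    intro s hs
    obtain ⟨i, hi, hR⟩ := mem_nbhd.1 (mem_sigma.1 hs).1
    exact mem_biUnion.2 ⟨.inl i, mem_toLeft.1 hi, by simp_all [slotFamily]⟩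
  rcases S.toRight.eq_empty_or_nonempty with hd | ⟨d, hd⟩
  · calc #S = #S.toLeft := by simp [← hS, hd]
      _ ≤ ∑ j ∈ N, u j := hup _
      _ = #(N.sigma fun j => range (u j)) := by simp
      _ ≤ _ := card_le_card hN
  · have hNc : Nᶜ.sigma (fun j => Ico (l j) (u j)) ⊆ S.biUnion (slotFamily R u l _) := by
      intro s hs
      exact mem_biUnion.2 ⟨.inr d, mem_toRight.1 hd, by simp_all [slotFamily]⟩
    have hdisj : Disjoint (N.sigma fun j => range (u j)) (Nᶜ.sigma fun j => Ico (l j) (u j)) :=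
      disjoint_left.2 fun s h1 h2 => mem_compl.1 (mem_sigma.1 h2).1 (mem_sigma.1 h1).1
    have hsplit : ∑ j ∈ N, u j + ∑ j ∈ Nᶜ, (u j - l j) + ∑ j ∈ Nᶜ, l j = ∑ j, u j := by
      rw [add_assoc, ← sum_add_distrib, sum_congr rfl fun j _ => Nat.sub_add_cancel (hlu j),
        sum_add_sum_compl]
    have hcard := card_le_card (union_subset hN hNc)
    rw [card_union_of_disjoint hdisj, card_sigma, card_sigma] at hcard
    simp only [card_range, Nat.card_Ico] at hcard
    have hd : #S.toRight ≤ ∑ j, u j - Fintype.card ι := by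
      simpa using card_le_univ S.toRight
    have hl : #S.toLeft + ∑ j ∈ Nᶜ, l j ≤ Fintype.card ι := hlow _
    have hm := card_le_sum_of_forall_card_le_sum_nbhd R hup
    omega

theorem exists_bounded_fibers_of_hall (hlu : l ≤ u)
    (hup : ∀ S : Finset ι, #S ≤ ∑ j ∈ nbhd R S, u j)
    (hlow : ∀ S : Finset ι, #S + ∑ j ∈ (nbhd R S)ᶜ, l j ≤ Fintype.card ι) :
    ∃ σ : ι → κ, (∀ i, R i (σ i)) ∧ ∀ j, l j ≤ #{i | σ i = j} ∧ #{i | σ i = j} ≤ u j := by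
  obtain ⟨g, hg_inj, hg_mem⟩ := (all_card_le_biUnion_card_iff_exists_injective _).1
    (card_le_card_biUnion_slotFamily R hlu hup hlow)
  have hg_slots x : g x ∈ slots u := slotFamily_subset_slots R u l x (hg_mem x)
  have hm := card_le_sum_of_forall_card_le_sum_nbhd R hup
  have hg_surj : univ.image g = slots u := by
    refine eq_of_subset_of_card_le (image_subset_iff.2 fun x _ => hg_slots x) ?_
    rw [card_image_of_injective _ hg_inj, card_univ, Fintype.card_sum]
    simp only [slots, card_sigma, card_range, Fintype.card_fin]
    omega
  refine ⟨fun i => (g (.inl i)).1, fun i => ?_, fun j => ⟨?_, ?_⟩⟩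
  · have hi := hg_mem (.inl i)
    simp only [slotFamily, Sum.elim_inl, mem_sigma, mem_filter, mem_univ, true_and] at hi
    exact hi.1
  · rw [← card_range (l j)]
    refine card_le_card_of_surjOn (fun i => (g (.inl i)).2) fun b hb => ?_
    rw [coe_range, Set.mem_Iio] at hb
    have hb_slot : (⟨j, b⟩ : Σ _ : κ, ℕ) ∈ univ.image g := by
      rw [hg_surj]
      simpa [slots] using hb.trans_le (hlu j)
    obtain ⟨x | d, -, hx⟩ := mem_image.1 hb_slot
    · exact ⟨x, by simp [hx], by simp [hx]⟩
    · have hd := hg_mem (.inr d)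
      simp only [slotFamily, Sum.elim_inr, hx, mem_sigma, mem_univ, mem_Ico, true_and] at hd
      omega
  · refine (card_le_card_of_injOn (fun i => (g (.inl i)).2) (t := range (u j)) ?_ ?_).trans (by simp)
    · intro i hi
      have := hg_slots (.inl i)
      simp_all [slots]
    · intro i hi i' hi' h
      simp only [coe_filter, mem_univ, true_and, Set.mem_ofPred_eq] at hi hi'
      exact Sum.inl_injective (hg_inj (Sigma.ext (hi.trans hi'.symm) (heq_of_eq h)))

end HallWithBounds

lemma sum_lt_sum_add_one_of_forall_ne_le {κ : Type*} [DecidableEq κ] {a b : κ → ℝ} (j₀ : κ)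
    (hle : ∀ j ≠ j₀, a j ≤ b j) (hlt : a j₀ < b j₀ + 1) (s : Finset κ) :
    ∑ j ∈ s, a j < ∑ j ∈ s, b j + 1 := by
  by_cases h : j₀ ∈ s
  · rw [← add_sum_erase s a h, ← add_sum_erase s b h]
    have := sum_le_sum (s := s.erase j₀) fun j hj => hle j (ne_of_mem_erase hj)
    linarith
  · have := sum_le_sum fun j hj => hle j fun hj₀ => h (hj₀ ▸ hj)
    linarith

section Rounding

variable {ι κ : Type*} [Fintype ι] [Fintype κ] {R : ι → κ → Prop} [DecidableRel R]
  {w : ι → κ → ℝ}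

variable {a : κ → ℝ}

lemma card_le_sum_nbhd_of_fractional (hw0 : ∀ i j, 0 ≤ w i j)
    (hwR : ∀ i j, ¬ R i j → w i j = 0) (hrow : ∀ i, ∑ j, w i j = 1)
    (hcol : ∀ j, ∑ i, w i j = a j) (S : Finset ι) :
    (#S : ℝ) ≤ ∑ j ∈ nbhd R S, a j :=
  calc (#S : ℝ) = ∑ i ∈ S, ∑ j, w i j := by simp [hrow]
    _ = ∑ i ∈ S, ∑ j ∈ nbhd R S, w i j := sum_congr rfl fun i hi =>
      (sum_subset (subset_univ _) fun j _ hj => hwR i j fun h => hj (mem_nbhd.2 ⟨i, hi, h⟩)).symm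
    _ = ∑ j ∈ nbhd R S, ∑ i ∈ S, w i j := sum_comm
    _ ≤ _ := sum_le_sum fun j _ => hcol j ▸
      sum_le_sum_of_subset_of_nonneg (subset_univ _) fun i _ _ => hw0 i j

theorem exists_rounding_of_fractional [DecidableEq κ] (hw0 : ∀ i j, 0 ≤ w i j)
    (hwR : ∀ i j, ¬ R i j → w i j = 0) (hrow : ∀ i, ∑ j, w i j = 1)
    (hcol : ∀ j, ∑ i, w i j = a j) (j₀ : κ) :
    ∃ σ : ι → κ, (∀ i, R i (σ i)) ∧ #{i | σ i = j₀} = ⌊a j₀⌋₊ ∧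
      ∀ j ≠ j₀, #{i | σ i = j} = ⌊a j⌋₊ ∨ #{i | σ i = j} = ⌈a j⌉₊ := by
  have ha j : 0 ≤ a j := hcol j ▸ sum_nonneg fun i _ => hw0 i j
  have hsum : ∑ j, a j = Fintype.card ι := by
    simp only [← hcol]
    rw [sum_comm]
    simp [hrow]
  set u : κ → ℕ := fun j => if j = j₀ then ⌊a j⌋₊ else ⌈a j⌉₊
  have hlu : (fun j => ⌊a j⌋₊) ≤ u := fun j => by
    by_cases hj : j = j₀ <;> simp [u, hj, Nat.floor_le_ceil]
  have hup S : #S ≤ ∑ j ∈ nbhd R S, u j := by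
    have hlt := sum_lt_sum_add_one_of_forall_ne_le (a := a) (b := fun j => (u j : ℝ)) j₀
      (fun j hj => by simp [u, hj, Nat.le_ceil]) (by simp [u, Nat.lt_floor_add_one]) (nbhd R S)
    have hS := card_le_sum_nbhd_of_fractional hw0 hwR hrow hcol S
    have : (#S : ℝ) < ((∑ j ∈ nbhd R S, u j : ℕ) : ℝ) + 1 := by push_cast; linarith
    exact Nat.lt_succ_iff.1 (by exact_mod_cast this)
  have hlow S : #S + ∑ j ∈ (nbhd R S)ᶜ, ⌊a j⌋₊ ≤ Fintype.card ι := by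
    have hS := card_le_sum_nbhd_of_fractional hw0 hwR hrow hcol S
    have hfloor : ∑ j ∈ (nbhd R S)ᶜ, (⌊a j⌋₊ : ℝ) ≤ ∑ j ∈ (nbhd R S)ᶜ, a j :=
      sum_le_sum fun j _ => Nat.floor_le (ha j)
    have hsplit := sum_add_sum_compl (nbhd R S) a
    have : ((#S + ∑ j ∈ (nbhd R S)ᶜ, ⌊a j⌋₊ : ℕ) : ℝ) ≤ Fintype.card ι := by
      push_cast; linarith
    exact_mod_cast this
  obtain ⟨σ, hσR, hσ⟩ := exists_bounded_fibers_of_hall R hlu hup hlow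
  refine ⟨σ, hσR, ?_, fun j hj => ?_⟩
  · have hbounds := hσ j₀
    simp only [u, if_pos rfl] at hbounds
    omega
  · have hbounds := hσ j
    have hceil := Nat.ceil_le_floor_add_one (a j)
    simp only [u, if_neg hj] at hbounds
    omega

end Rounding

lemma Fin.card_filter_snoc_eq {α : Type*} [DecidableEq α] {m : ℕ} (σ : Fin m → α) (x b : α) :
    #{i | (Fin.snoc σ x : Fin (m + 1) → α) i = b} = #{i | σ i = b} + if x = b then 1 else 0 := by
  simp only [card_filter, Fin.sum_univ_castSucc, Fin.snoc_castSucc, Fin.snoc_last]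

theorem stmt2_general (n q : ℕ) (hn : 0 < n)
    (a : Fin q → ℝ) (ha : ∀ j, 0 ≤ a j)
    (E : Fin (n - 1) → Fin q → Prop)
    (w : Fin (n - 1) → Fin q → ℝ)
    (hw0 : ∀ i j, 0 ≤ w i j)
    (hwE : ∀ i j, ¬ E i j → w i j = 0)
    (hrow : ∀ i, ∑ j, w i j = 1)
    (hcol : ∀ j, ∑ i, w i j = a j) :
    ∀ jstar : Fin q, ∃ π : Fin n → Fin q,
      π ⟨n - 1, Nat.sub_lt hn one_pos⟩ = jstar ∧
      (∀ i : Fin (n - 1), E i (π (Fin.castLE (Nat.sub_le n 1) i))) ∧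
      ((Finset.univ.filter fun i => π i = jstar).card : ℤ) = ⌊a jstar⌋ + 1 ∧
      (∀ j, j ≠ jstar →
        ((Finset.univ.filter fun i => π i = j).card : ℤ) = ⌊a j⌋ ∨
        ((Finset.univ.filter fun i => π i = j).card : ℤ) = ⌈a j⌉) := by
  intro jstar
  classical
  obtain ⟨m, rfl⟩ : ∃ m, n = m + 1 := ⟨n - 1, (Nat.succ_pred_eq_of_pos hn).symm⟩
  obtain ⟨σ, hσE, hσ_jstar, hσ⟩ := exists_rounding_of_fractional (ι := Fin m) hw0 hwE hrow hcol jstar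
  refine ⟨Fin.snoc σ jstar, Fin.snoc_last _ _, fun i => ?_, ?_, fun j hj => ?_⟩
  · rw [show Fin.castLE _ i = Fin.castSucc (i : Fin m) from rfl, Fin.snoc_castSucc]
    exact hσE i
  · rw [Fin.card_filter_snoc_eq, hσ_jstar, if_pos rfl]
    push_cast
    rw [Int.natCast_floor_eq_floor (ha jstar)]
  · rw [Fin.card_filter_snoc_eq, if_neg (Ne.symm hj), add_zero,
      ← Int.natCast_floor_eq_floor (ha j), ← Int.natCast_ceil_eq_ceil (ha j)]
    exact_mod_cast hσ j hj

/-- Let `n, q` be positive integers and `a_1,…,a_q` nonnegative reals summing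
to `n−1`. Let `H` be a bipartite graph with parts `[n−1]` and `[q]` and nonnegative edge
weights `w` with row sums `1` and column sums `a_j`. Then for every `j* ∈ [q]` there exists an
assignment `π : [n] → [q]` such that `π(n) = j*`; for every `i ∈ [n−1]`, `{i, π(i)}` is an edge
of `H`; `|π⁻¹(j*)| = ⌊a_{j*}⌋ + 1`; and for every `j ≠ j*`, `|π⁻¹(j)| ∈ {⌊a_j⌋, ⌈a_j⌉}`. -/
theorem stmt2 (n q : ℕ) (hn : 0 < n) (hq : 0 < q)
    (a : Fin q → ℝ) (ha : ∀ j, 0 ≤ a j) (hasum : ∑ j, a j = (n : ℝ) - 1)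
    (E : Fin (n - 1) → Fin q → Prop)
    (w : Fin (n - 1) → Fin q → ℝ)
    (hw0 : ∀ i j, 0 ≤ w i j)
    (hwE : ∀ i j, ¬ E i j → w i j = 0)
    (hrow : ∀ i, ∑ j, w i j = 1)
    (hcol : ∀ j, ∑ i, w i j = a j) :
    ∀ jstar : Fin q, ∃ π : Fin n → Fin q,
      π ⟨n - 1, Nat.sub_lt hn one_pos⟩ = jstar ∧
      (∀ i : Fin (n - 1), E i (π (Fin.castLE (Nat.sub_le n 1) i))) ∧
      ((Finset.univ.filter fun i => π i = jstar).card : ℤ) = ⌊a jstar⌋ + 1 ∧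
      (∀ j, j ≠ jstar →
        ((Finset.univ.filter fun i => π i = j).card : ℤ) = ⌊a j⌋ ∨
        ((Finset.univ.filter fun i => π i = j).card : ℤ) = ⌈a j⌉) :=
  stmt2_general n q hn a ha E w hw0 hwE hrow hcol
end

section
/- Let n ≥ 2 be an integer, δ = 1/(6n²), ω = (1/3, 1/3, 1/3), and ω^δ = (1/3 − δ, 1/3 + δ/2, 1/3 + δ/2). Let p, q, r be three points of the standard simplex Δ² all of whose coordinates are integer multiples of 1/(n−1). If ω^δ belongs to the convex hull of {p, q, r}, then ω also belongs to the convex hull of {p, q, r}. -/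
/-!
Put `N = n - 1` and `ω = (1/3, 1/3, 1/3)`. For two grid points `x, y ∈ Δ² ∩ (1/N)ℤ³` the triple
product `ω ⬝ (x × y)` lies in `(1/(3N²))ℤ` and every coordinate of `ω - x` lies in `(1/(3N))ℤ`,
while replacing `ω` by `ω^δ` moves these numbers by at most `‖ω - ω^δ‖₁ = 2δ = 1/(3n²) < 1/(3N²)`.
So each of them either vanishes at `ω` or has the same sign at `ω` and at `ω^δ`.
If `p, q, r` are affinely independent, membership in their hull means nonnegativity of the three
barycentric coordinates `z ⬝ (q × r) / (p ⬝ (q × r))`, … , which therefore passes from `ω^δ` to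
`ω`. Otherwise the hull is a segment `[x, y]` between two of the points; the triple product puts
`ω` on the line `xy`, and one coordinate in which `x` and `y` differ puts it between them.
-/

open Matrix Set

lemma Collinear.exists_subset_segment {𝕜 E : Type*} [Field 𝕜] [LinearOrder 𝕜]
    [IsStrictOrderedRing 𝕜] [AddCommGroup E] [Module 𝕜 E] {p q r : E}
    (h : Collinear 𝕜 ({p, q, r} : Set E)) :
    ∃ x ∈ ({p, q, r} : Set E), ∃ y ∈ ({p, q, r} : Set E), {p, q, r} ⊆ segment 𝕜 x y := by
  rcases h.wbtw_or_wbtw_or_wbtw with h | h | h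
  · exact ⟨p, by simp, r, by simp, by
      simp [insert_subset_iff, left_mem_segment, right_mem_segment, mem_segment_iff_wbtw.2 h]⟩
  · exact ⟨q, by simp, p, by simp, by
      simp [insert_subset_iff, left_mem_segment, right_mem_segment, mem_segment_iff_wbtw.2 h]⟩
  · exact ⟨r, by simp, q, by simp, by
      simp [insert_subset_iff, left_mem_segment, right_mem_segment, mem_segment_iff_wbtw.2 h]⟩

namespace GridTriangle

lemma mul_pos_of_abs_sub_lt_abs {A B : ℝ} (h : |A - B| < |A|) : 0 < A * B := by
  rcases abs_lt.mp h with ⟨h1, h2⟩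
  rcases le_or_gt 0 A with hA | hA
  · rw [abs_of_nonneg hA] at h1 h2
    nlinarith
  · rw [abs_of_neg hA] at h1 h2
    nlinarith

lemma eq_zero_or_mul_pos_of_abs_sub_lt {A B M : ℝ} {k : ℤ} (hA : A = k / M)
    (hAB : |A - B| < 1 / M) : A = 0 ∨ 0 < A * B := by
  rcases eq_or_ne k 0 with rfl | hk
  · simp [hA]
  have hM : 0 < M := one_div_pos.mp ((abs_nonneg _).trans_lt hAB)
  have hA_ge : 1 / M ≤ |A| := by
    rw [hA, abs_div, abs_of_pos hM]
    gcongr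
    exact_mod_cast Int.one_le_abs hk
  exact Or.inr (mul_pos_of_abs_sub_lt_abs (hAB.trans_le hA_ge))

lemma div_nonneg_of_eq_zero_or_mul_pos {A B D : ℝ} (h : A = 0 ∨ 0 < A * B) (hB : 0 ≤ B / D) :
    0 ≤ A / D := by
  rcases h with rfl | h
  · simp
  have hB0 : B ≠ 0 := by rintro rfl; simp at h
  have : 0 ≤ A / D * B ^ 2 := by
    rw [show A / D * B ^ 2 = A * B * (B / D) by ring]
    exact mul_nonneg h.le hB
  exact nonneg_of_mul_nonneg_left this (by positivity)

section

variable {R : Type*} [CommRing R]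

/-- In the plane `∑ j, x j = 1` the cross product of two edge vectors is normal to the plane. -/
lemma sub_cross_sub_of_sum_eq_one {x y z : Fin 3 → R} (hx : ∑ j, x j = 1) (hy : ∑ j, y j = 1)
    (hz : ∑ j, z j = 1) : (y - x) ⨯₃ (z - x) = fun _ ↦ z ⬝ᵥ x ⨯₃ y := by
  rw [Fin.sum_univ_three] at hx hy hz
  have hx2 : x 2 = 1 - x 0 - x 1 := by linear_combination hx
  have hy2 : y 2 = 1 - y 0 - y 1 := by linear_combination hy
  have hz2 : z 2 = 1 - z 0 - z 1 := by linear_combination hz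
  ext j
  fin_cases j <;> simp [cross_apply, vecHead, vecTail, hx2, hy2, hz2] <;> ring

/-- Cramer's rule for the system with columns `p, q, r`. -/
lemma triple_product_smul_eq (p q r z : Fin 3 → R) :
    (p ⬝ᵥ q ⨯₃ r) • z = (z ⬝ᵥ q ⨯₃ r) • p + (z ⬝ᵥ r ⨯₃ p) • q + (z ⬝ᵥ p ⨯₃ q) • r := by
  ext j
  fin_cases j <;> simp [cross_apply, vecHead, vecTail] <;> ring

lemma lineMap_dotProduct_cross (x y : Fin 3 → R) (s : R) :
    AffineMap.lineMap x y s ⬝ᵥ x ⨯₃ y = 0 := by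
  simp [AffineMap.lineMap_apply_module, add_dotProduct]

end

variable {p q r x y z : Fin 3 → ℝ}

lemma exists_lineMap_eq_of_dotProduct_cross_eq_zero (hx : ∑ j, x j = 1) (hy : ∑ j, y j = 1)
    (hz : ∑ j, z j = 1) (hxy : x ≠ y) (h : z ⬝ᵥ x ⨯₃ y = 0) :
    ∃ t : ℝ, AffineMap.lineMap x y t = z := by
  have hdep : ¬ LinearIndependent ℝ ![y - x, z - x] := by
    rw [← crossProduct_ne_zero_iff_linearIndependent, sub_cross_sub_of_sum_eq_one hx hy hz, h,
      not_not]
    rfl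
  rw [LinearIndependent.pair_iff' (sub_ne_zero.2 hxy.symm)] at hdep
  push Not at hdep
  obtain ⟨t, ht⟩ := hdep
  exact ⟨t, by rw [AffineMap.lineMap_apply_module', ht, sub_add_cancel]⟩

lemma collinear_of_dotProduct_cross_eq_zero (hp : ∑ j, p j = 1) (hq : ∑ j, q j = 1)
    (hr : ∑ j, r j = 1) (h : p ⬝ᵥ q ⨯₃ r = 0) : Collinear ℝ ({p, q, r} : Set (Fin 3 → ℝ)) := by
  rcases eq_or_ne q r with rfl | hqr
  · simpa using collinear_pair ℝ p q
  obtain ⟨t, rfl⟩ := exists_lineMap_eq_of_dotProduct_cross_eq_zero hq hr hp hqr h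
  exact collinear_insert_of_mem_affineSpan_pair (AffineMap.lineMap_mem_affineSpan_pair t q r)

lemma dotProduct_cross_div_nonneg_of_mem_convexHull (hz : z ∈ convexHull ℝ {p, q, r}) :
    0 ≤ z ⬝ᵥ q ⨯₃ r / (p ⬝ᵥ q ⨯₃ r) := by
  have hlin : IsLinearMap ℝ fun v : Fin 3 → ℝ ↦ v ⬝ᵥ q ⨯₃ r / (p ⬝ᵥ q ⨯₃ r) :=
    ⟨fun u v ↦ by simp [add_dotProduct, add_div], fun c v ↦ by simp [mul_div_assoc]⟩
  refine convexHull_min ?_ (convex_halfSpace_ge hlin 0) hz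
  rintro v (rfl | rfl | rfl)
  · rcases eq_or_ne (v ⬝ᵥ q ⨯₃ r) 0 with h | h <;> simp [h]
  all_goals simp

lemma mem_convexHull_of_dotProduct_cross_div_nonneg (hp : ∑ j, p j = 1) (hq : ∑ j, q j = 1)
    (hr : ∑ j, r j = 1) (hz : ∑ j, z j = 1) (hD : p ⬝ᵥ q ⨯₃ r ≠ 0)
    (ha : 0 ≤ z ⬝ᵥ q ⨯₃ r / (p ⬝ᵥ q ⨯₃ r)) (hb : 0 ≤ z ⬝ᵥ r ⨯₃ p / (p ⬝ᵥ q ⨯₃ r))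
    (hc : 0 ≤ z ⬝ᵥ p ⨯₃ q / (p ⬝ᵥ q ⨯₃ r)) : z ∈ convexHull ℝ {p, q, r} := by
  have hcramer := triple_product_smul_eq p q r z
  have hsum : z ⬝ᵥ q ⨯₃ r + z ⬝ᵥ r ⨯₃ p + z ⬝ᵥ p ⨯₃ q = p ⬝ᵥ q ⨯₃ r := by
    have := congrArg (fun v ↦ ∑ j, v j) hcramer
    simp only [Pi.add_apply, Pi.smul_apply, smul_eq_mul, Finset.sum_add_distrib,
      ← Finset.mul_sum, hp, hq, hr, hz, mul_one] at this
    exact this.symm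
  refine mem_convexHull_of_exists_fintype ![z ⬝ᵥ q ⨯₃ r / (p ⬝ᵥ q ⨯₃ r),
    z ⬝ᵥ r ⨯₃ p / (p ⬝ᵥ q ⨯₃ r), z ⬝ᵥ p ⨯₃ q / (p ⬝ᵥ q ⨯₃ r)] ![p, q, r] ?_ ?_ ?_ ?_
  · intro i; fin_cases i <;> assumption
  · simp only [Fin.sum_univ_three, cons_val]
    rw [← add_div, ← add_div, hsum, div_self hD]
  · intro i; fin_cases i <;> simp
  · apply smul_right_injective _ hD
    simp only [Fin.sum_univ_three, cons_val, smul_add, smul_smul,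
      mul_div_cancel₀ _ hD]
    exact hcramer.symm

lemma abs_dotProduct_cross_le (hx : x ∈ Icc 0 1) (hy : y ∈ Icc 0 1) (v : Fin 3 → ℝ) :
    |v ⬝ᵥ x ⨯₃ y| ≤ ∑ j, |v j| := by
  have hcross : ∀ j, |(x ⨯₃ y) j| ≤ 1 := by
    have hprod : ∀ i k, 0 ≤ x i * y k ∧ x i * y k ≤ 1 := fun i k ↦
      ⟨mul_nonneg (hx.1 i) (hy.1 k), mul_le_one₀ (hx.2 i) (hy.1 k) (hy.2 k)⟩
    intro j
    fin_cases j <;> simpa [cross_apply] using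
      abs_sub_le_of_le_of_le (hprod _ _).1 (hprod _ _).2 (hprod _ _).1 (hprod _ _).2
  calc |v ⬝ᵥ x ⨯₃ y| ≤ ∑ j, |v j * (x ⨯₃ y) j| := Finset.abs_sum_le_sum_abs _ _
    _ ≤ ∑ j, |v j| := Finset.sum_le_sum fun j _ ↦ by
        rw [abs_mul]; exact mul_le_of_le_one_right (abs_nonneg _) (hcross j)

def IsGridPoint (N : ℕ) (x : Fin 3 → ℝ) : Prop := ∀ j, ∃ k : ℤ, x j = k / N

noncomputable def barycenter : Fin 3 → ℝ := fun _ ↦ 1 / 3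

lemma sum_barycenter : ∑ j, barycenter j = 1 := by
  simp only [barycenter, Fin.sum_univ_three]
  norm_num

variable {N : ℕ} {w : Fin 3 → ℝ}

lemma IsGridPoint.exists_barycenter_sub_eq (hN : N ≠ 0) (hx : IsGridPoint N x) (j : Fin 3) :
    ∃ k : ℤ, barycenter j - x j = k / (3 * N) := by
  obtain ⟨k, hk⟩ := hx j
  exact ⟨N - 3 * k, by rw [hk, barycenter]; field_simp; push_cast; ring⟩

lemma IsGridPoint.exists_barycenter_dotProduct_cross_eq (hN : N ≠ 0) (hx : IsGridPoint N x)
    (hy : IsGridPoint N y) : ∃ k : ℤ, barycenter ⬝ᵥ x ⨯₃ y = k / (3 * N ^ 2) := by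
  choose X hX using hx
  choose Y hY using hy
  refine ⟨X 1 * Y 2 - X 2 * Y 1 + (X 2 * Y 0 - X 0 * Y 2) + (X 0 * Y 1 - X 1 * Y 0), ?_⟩
  simp only [barycenter, cross_apply, vec3_dotProduct, cons_val, hX, hY]
  field_simp
  push_cast
  ring

lemma IsGridPoint.barycenter_sub_eq_zero_or_mul_pos (hN : N ≠ 0) (hx : IsGridPoint N x)
    (hwω : ∑ j, |barycenter j - w j| < 1 / (3 * N ^ 2)) (j : Fin 3) :
    barycenter j - x j = 0 ∨ 0 < (barycenter j - x j) * (w j - x j) := by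
  obtain ⟨k, hk⟩ := hx.exists_barycenter_sub_eq hN j
  refine eq_zero_or_mul_pos_of_abs_sub_lt hk ?_
  have hN1 : (1 : ℝ) ≤ N := by exact_mod_cast Nat.one_le_iff_ne_zero.2 hN
  calc |barycenter j - x j - (w j - x j)| = |barycenter j - w j| := by ring_nf
    _ ≤ ∑ i, |barycenter i - w i| :=
        Finset.single_le_sum (fun i _ ↦ abs_nonneg (barycenter i - w i)) (Finset.mem_univ j)
    _ < 1 / (3 * N ^ 2) := hwω
    _ ≤ 1 / (3 * N) := by gcongr; nlinarith

lemma IsGridPoint.barycenter_dotProduct_cross_eq_zero_or_mul_pos (hN : N ≠ 0)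
    (hxN : IsGridPoint N x) (hyN : IsGridPoint N y) (hx : x ∈ Icc 0 1) (hy : y ∈ Icc 0 1)
    (hwω : ∑ j, |barycenter j - w j| < 1 / (3 * N ^ 2)) :
    barycenter ⬝ᵥ x ⨯₃ y = 0 ∨ 0 < (barycenter ⬝ᵥ x ⨯₃ y) * (w ⬝ᵥ x ⨯₃ y) := by
  obtain ⟨k, hk⟩ := hxN.exists_barycenter_dotProduct_cross_eq hN hyN
  refine eq_zero_or_mul_pos_of_abs_sub_lt hk ?_
  calc |barycenter ⬝ᵥ x ⨯₃ y - w ⬝ᵥ x ⨯₃ y| = |(barycenter - w) ⬝ᵥ x ⨯₃ y| := by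
        rw [sub_dotProduct]
    _ ≤ ∑ j, |(barycenter - w) j| := abs_dotProduct_cross_le hx hy _
    _ < 1 / (3 * N ^ 2) := hwω

lemma IsGridPoint.nonneg_of_lineMap_eq (hN : N ≠ 0) (hxN : IsGridPoint N x) {i : Fin 3}
    (hi : x i ≠ y i) (hwω : ∑ j, |barycenter j - w j| < 1 / (3 * N ^ 2)) {s t : ℝ}
    (hs : 0 ≤ s) (hsw : AffineMap.lineMap x y s = w) (ht : AffineMap.lineMap x y t = barycenter) :
    0 ≤ t := by
  have hd : y i - x i ≠ 0 := sub_ne_zero.2 hi.symm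
  have hcoord (c : ℝ) : (AffineMap.lineMap x y c i - x i) / (y i - x i) = c := by
    simp [AffineMap.lineMap_apply_module', hd]
  have := div_nonneg_of_eq_zero_or_mul_pos (hxN.barycenter_sub_eq_zero_or_mul_pos hN hwω i)
    (D := y i - x i) (by rwa [← hsw, hcoord])
  rwa [← ht, hcoord] at this

lemma barycenter_mem_segment (hN : N ≠ 0) (hx : x ∈ stdSimplex ℝ (Fin 3))
    (hy : y ∈ stdSimplex ℝ (Fin 3)) (hxN : IsGridPoint N x) (hyN : IsGridPoint N y)
    (hwω : ∑ j, |barycenter j - w j| < 1 / (3 * N ^ 2)) (hw : w ∈ segment ℝ x y) :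
    barycenter ∈ segment ℝ x y := by
  rcases eq_or_ne x y with rfl | hxy
  · rw [segment_same, mem_singleton_iff] at hw ⊢
    funext j
    have := hxN.barycenter_sub_eq_zero_or_mul_pos hN hwω j
    rw [hw, sub_self, mul_zero, lt_self_iff_false, or_false, sub_eq_zero] at this
    exact this
  rw [segment_eq_image_lineMap] at hw ⊢
  obtain ⟨s, ⟨hs0, hs1⟩, hsw⟩ := hw
  have hline : barycenter ⬝ᵥ x ⨯₃ y = 0 :=
    (hxN.barycenter_dotProduct_cross_eq_zero_or_mul_pos hN hyN (stdSimplex_subset_Icc ℝ hx)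
      (stdSimplex_subset_Icc ℝ hy) hwω).resolve_right (by simp [← hsw, lineMap_dotProduct_cross])
  obtain ⟨t, ht⟩ := exists_lineMap_eq_of_dotProduct_cross_eq_zero hx.2 hy.2 sum_barycenter hxy hline
  obtain ⟨i, hi⟩ := Function.ne_iff.mp hxy
  have ht1 : 0 ≤ 1 - t := hyN.nonneg_of_lineMap_eq hN hi.symm hwω (sub_nonneg.2 hs1)
    (by rw [AffineMap.lineMap_apply_one_sub, hsw]) (by rw [AffineMap.lineMap_apply_one_sub, ht])
  exact ⟨t, ⟨hxN.nonneg_of_lineMap_eq hN hi hwω hs0 hsw ht, sub_nonneg.1 ht1⟩, ht⟩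

lemma barycenter_mem_convexHull_of_dotProduct_cross_ne_zero (hN : N ≠ 0)
    (hp : p ∈ stdSimplex ℝ (Fin 3)) (hq : q ∈ stdSimplex ℝ (Fin 3))
    (hr : r ∈ stdSimplex ℝ (Fin 3)) (hpN : IsGridPoint N p) (hqN : IsGridPoint N q)
    (hrN : IsGridPoint N r) (hw : w ∈ convexHull ℝ {p, q, r})
    (hwω : ∑ j, |barycenter j - w j| < 1 / (3 * N ^ 2)) (hD : p ⬝ᵥ q ⨯₃ r ≠ 0) :
    barycenter ∈ convexHull ℝ {p, q, r} := by
  have edge {x y : Fin 3 → ℝ} {D : ℝ} (hx : x ∈ stdSimplex ℝ (Fin 3))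
      (hy : y ∈ stdSimplex ℝ (Fin 3)) (hxN : IsGridPoint N x) (hyN : IsGridPoint N y)
      (h : 0 ≤ w ⬝ᵥ x ⨯₃ y / D) : 0 ≤ barycenter ⬝ᵥ x ⨯₃ y / D :=
    div_nonneg_of_eq_zero_or_mul_pos (hxN.barycenter_dotProduct_cross_eq_zero_or_mul_pos hN hyN
      (stdSimplex_subset_Icc ℝ hx) (stdSimplex_subset_Icc ℝ hy) hwω) h
  have hqrp : ({q, r, p} : Set (Fin 3 → ℝ)) = {p, q, r} := by
    ext; simp only [mem_insert_iff, mem_singleton_iff]; tauto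
  have hrpq : ({r, p, q} : Set (Fin 3 → ℝ)) = {p, q, r} := by
    ext; simp only [mem_insert_iff, mem_singleton_iff]; tauto
  refine mem_convexHull_of_dotProduct_cross_div_nonneg hp.2 hq.2 hr.2 sum_barycenter hD
    (edge hq hr hqN hrN (dotProduct_cross_div_nonneg_of_mem_convexHull hw)) ?_ ?_
  · rw [triple_product_permutation p q r]
    exact edge hr hp hrN hpN (dotProduct_cross_div_nonneg_of_mem_convexHull (hqrp ▸ hw))
  · rw [triple_product_permutation p q r, triple_product_permutation q r p]
    exact edge hp hq hpN hqN (dotProduct_cross_div_nonneg_of_mem_convexHull (hrpq ▸ hw))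

theorem barycenter_mem_convexHull (hN : N ≠ 0)
    (hS : ∀ x ∈ ({p, q, r} : Set (Fin 3 → ℝ)), x ∈ stdSimplex ℝ (Fin 3) ∧ IsGridPoint N x)
    (hw : w ∈ convexHull ℝ {p, q, r}) (hwω : ∑ j, |barycenter j - w j| < 1 / (3 * N ^ 2)) :
    barycenter ∈ convexHull ℝ {p, q, r} := by
  obtain ⟨hp, hpN⟩ := hS p (by simp)
  obtain ⟨hq, hqN⟩ := hS q (by simp)
  obtain ⟨hr, hrN⟩ := hS r (by simp)
  by_cases hD : p ⬝ᵥ q ⨯₃ r = 0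
  · obtain ⟨x, hx, y, hy, hsub⟩ :=
      (collinear_of_dotProduct_cross_eq_zero hp.2 hq.2 hr.2 hD).exists_subset_segment
    exact segment_subset_convexHull hx hy <| barycenter_mem_segment hN (hS x hx).1 (hS y hy).1
      (hS x hx).2 (hS y hy).2 hwω (convexHull_min hsub (convex_segment x y) hw)
  · exact barycenter_mem_convexHull_of_dotProduct_cross_ne_zero hN hp hq hr hpN hqN hrN hw hwω hD

end GridTriangle

/-- Lemma: the perturbed barycenter can be replaced by the barycenter.
Let `n ≥ 2`, `δ = 1/(6n²)`, `ω = (1/3, 1/3, 1/3)`, and `ω^δ = (1/3 − δ, 1/3 + δ/2, 1/3 + δ/2)`.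
Let `p, q, r` be three points of the standard simplex `Δ²` all of whose coordinates are
integer multiples of `1/(n−1)`. If `ω^δ` belongs to the convex hull of `{p, q, r}`, then so
does `ω`. -/
theorem stmt8 (n : ℕ) (hn : 2 ≤ n) (p q r : Fin 3 → ℝ)
    (hp : p ∈ stdSimplex ℝ (Fin 3)) (hq : q ∈ stdSimplex ℝ (Fin 3))
    (hr : r ∈ stdSimplex ℝ (Fin 3))
    (hmul : ∀ x ∈ ({p, q, r} : Set (Fin 3 → ℝ)), ∀ j : Fin 3,
      ∃ ℓ : ℕ, ℓ ≤ n - 1 ∧ x j = (ℓ : ℝ) / ((n : ℝ) - 1))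
    (hδ : ![1 / 3 - 1 / (6 * (n : ℝ) ^ 2),
            1 / 3 + 1 / (6 * (n : ℝ) ^ 2) / 2,
            1 / 3 + 1 / (6 * (n : ℝ) ^ 2) / 2] ∈
          convexHull ℝ ({p, q, r} : Set (Fin 3 → ℝ))) :
    (fun _ => 1 / 3 : Fin 3 → ℝ) ∈ convexHull ℝ ({p, q, r} : Set (Fin 3 → ℝ)) := by
  have hcast : ((n - 1 : ℕ) : ℝ) = n - 1 := by rw [Nat.cast_sub (by omega), Nat.cast_one]
  refine GridTriangle.barycenter_mem_convexHull (N := n - 1) (by omega) ?_ hδ ?_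
  · intro x hx
    refine ⟨by rcases hx with rfl | rfl | rfl <;> assumption, fun j ↦ ?_⟩
    obtain ⟨ℓ, -, hℓ⟩ := hmul x hx j
    exact ⟨ℓ, by rw [hℓ, hcast, Int.cast_natCast]⟩
  · have hn' : (2 : ℝ) ≤ n := by exact_mod_cast hn
    calc _ = 1 / (3 * (n : ℝ) ^ 2) := by
          simp only [GridTriangle.barycenter, Fin.sum_univ_three, Matrix.cons_val]
          have hδ0 : (0 : ℝ) < 1 / (6 * n ^ 2) := by positivity
          rw [sub_sub_cancel, sub_add_cancel_left, abs_neg, abs_of_pos hδ0,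
            abs_of_pos (half_pos hδ0)]
          ring
      _ < 1 / (3 * ((n - 1 : ℕ) : ℝ) ^ 2) := by
          rw [hcast]
          gcongr <;> nlinarith
end

section
/- Fix an integer N ≥ 1 and the triangulation T of [0,1]² described in the context, and let t ∈ (0,1). Let f : [0,1]² → Δ² be T-piecewise affine, vertically monotone at every x = k/N (k ∈ {0,…,N}), and suppose f_1(v) ≠ t for every grid vertex v. Then for every basic square S, either no point of the boundary ∂S satisfies f_1 = t, or the set {p ∈ ∂S : f_1(p) = t} consists of exactly two points, which lie on two distinct edges of S. -/
/-!
On each edge of the square `f₁` is affine, so the level set `f₁ = t` meets an edge in at most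
one point, and in exactly one point iff the corner values at its ends lie on opposite sides of
`t`. Going once around the four corners, the side of `t` changes an even number of times, and
it cannot change on all four edges: on the vertical edges `f₁` increases upwards, so a change
on both of them forces both bottom corners below `t`, and then the bottom edge has no change.
Hence zero or two edges are crossed, and the two crossing points differ because edges meet only
at corners, where `f₁ ≠ t`.
-/

/-- The lower-left triangle of the basic square with bottom-left corner `(k/N, l/N)`,
cut off by the diagonal from the top-left corner to the bottom-right corner. -/
def lowerTri (N k l : ℕ) : Set (ℝ × ℝ) :=
  {p | (k : ℝ) / N ≤ p.1 ∧ (l : ℝ) / N ≤ p.2 ∧ p.1 + p.2 ≤ ((k : ℝ) + l + 1) / N}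

/-- The upper-right triangle of the basic square with bottom-left corner `(k/N, l/N)`,
cut off by the diagonal from the top-left corner to the bottom-right corner. -/
def upperTri (N k l : ℕ) : Set (ℝ × ℝ) :=
  {p | p.1 ≤ ((k : ℝ) + 1) / N ∧ p.2 ≤ ((l : ℝ) + 1) / N ∧ ((k : ℝ) + l + 1) / N ≤ p.1 + p.2}

/-- `f` is piecewise affine with respect to the triangulation `T` of `[0,1]²` obtained by
cutting each of the `N²` basic squares along the diagonal joining its top-left corner to its
bottom-right corner: `f` agrees with an affine map on each triangle of `T`. -/
def IsPWAffine (N : ℕ) (f : ℝ × ℝ → Fin 3 → ℝ) : Prop :=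
  ∀ k l : ℕ, k < N → l < N →
    (∃ g : (ℝ × ℝ) →ᵃ[ℝ] (Fin 3 → ℝ), ∀ p ∈ lowerTri N k l, f p = g p) ∧
    (∃ g : (ℝ × ℝ) →ᵃ[ℝ] (Fin 3 → ℝ), ∀ p ∈ upperTri N k l, f p = g p)

/-- The basic square with bottom-left corner `(k/N, l/N)`. -/
def basicSquare (N k l : ℕ) : Set (ℝ × ℝ) :=
  Set.Icc ((k : ℝ) / N) (((k : ℝ) + 1) / N) ×ˢ Set.Icc ((l : ℝ) / N) (((l : ℝ) + 1) / N)

/-- The four edges (sides) of the basic square with bottom-left corner `(k/N, l/N)`: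
bottom, top, left, right. -/
def squareEdge (N k l : ℕ) : Fin 4 → Set (ℝ × ℝ) :=
  ![Set.Icc ((k : ℝ) / N) (((k : ℝ) + 1) / N) ×ˢ ({(l : ℝ) / N} : Set ℝ),
    Set.Icc ((k : ℝ) / N) (((k : ℝ) + 1) / N) ×ˢ ({((l : ℝ) + 1) / N} : Set ℝ),
    ({(k : ℝ) / N} : Set ℝ) ×ˢ Set.Icc ((l : ℝ) / N) (((l : ℝ) + 1) / N),
    ({((k : ℝ) + 1) / N} : Set ℝ) ×ˢ Set.Icc ((l : ℝ) / N) (((l : ℝ) + 1) / N)]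

open Set

namespace AffineMap

variable {E : Type*} [AddCommGroup E] [Module ℝ E] (g : E →ᵃ[ℝ] ℝ) {p q : E} {t : ℝ}

theorem exists_mem_segment_eq_iff (hp : g p ≠ t) (hq : g q ≠ t) :
    (∃ z ∈ segment ℝ p q, g z = t) ↔ ¬(g p < t ↔ g q < t) := by
  rw [← mem_image, image_segment, segment_eq_uIcc, mem_uIcc]
  grind

theorem subsingleton_setOf_mem_segment_eq (hp : g p ≠ t) :
    {z ∈ segment ℝ p q | g z = t}.Subsingleton := by
  rw [segment_eq_image_lineMap]
  rintro _ ⟨⟨s₁, -, rfl⟩, h₁⟩ _ ⟨⟨s₂, -, rfl⟩, h₂⟩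
  rw [apply_lineMap, lineMap_apply_ring'] at h₁ h₂
  have hpq : g q - g p ≠ 0 := fun h => hp (by rw [h] at h₁; linarith)
  rw [mul_right_cancel₀ hpq (by linarith : s₁ * (g q - g p) = s₂ * (g q - g p))]

end AffineMap

def rectEdge (a b c d : ℝ) : Fin 4 → Set (ℝ × ℝ) :=
  ![Icc a b ×ˢ {c}, Icc a b ×ˢ {d}, {a} ×ˢ Icc c d, {b} ×ˢ Icc c d]

def rectEdgeEnds (a b c d : ℝ) : Fin 4 → (ℝ × ℝ) × (ℝ × ℝ) :=
  ![((a, c), (b, c)), ((a, d), (b, d)), ((a, c), (a, d)), ((b, c), (b, d))]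

section Rectangle

variable {a b c d : ℝ}

theorem rectEdge_eq_segment (hab : a ≤ b) (hcd : c ≤ d) (e : Fin 4) :
    rectEdge a b c d e = segment ℝ (rectEdgeEnds a b c d e).1 (rectEdgeEnds a b c d e).2 := by
  fin_cases e <;>
    simp [rectEdge, rectEdgeEnds, ← Prod.image_mk_segment_left, ← Prod.image_mk_segment_right,
      segment_eq_Icc, hab, hcd, prod_singleton, singleton_prod]

theorem rectEdgeEnds_mem_corners (e : Fin 4) :
    (rectEdgeEnds a b c d e).1 ∈ ({a, b} ×ˢ {c, d} : Set (ℝ × ℝ)) ∧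
      (rectEdgeEnds a b c d e).2 ∈ ({a, b} ×ˢ {c, d} : Set (ℝ × ℝ)) := by
  fin_cases e <;> simp [rectEdgeEnds]

theorem frontier_Icc_prod_Icc (hab : a ≤ b) (hcd : c ≤ d) :
    frontier (Icc a b ×ˢ Icc c d) = ⋃ e, rectEdge a b c d e := by
  rw [frontier_prod_eq, frontier_Icc hab, frontier_Icc hcd, closure_Icc, closure_Icc]
  ext p
  simp [rectEdge, Fin.exists_fin_succ, and_or_left, or_and_right, or_assoc]

theorem rectEdge_inter_subset_corners (hab : a < b) (hcd : c < d) {e₁ e₂ : Fin 4}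
    (he : e₁ ≠ e₂) : rectEdge a b c d e₁ ∩ rectEdge a b c d e₂ ⊆ {a, b} ×ˢ {c, d} := by
  rintro ⟨x, y⟩ ⟨h₁, h₂⟩
  fin_cases e₁ <;> fin_cases e₂ <;> simp_all [rectEdge]

theorem rectEdgeEnds_crossings_eq_none_or_pair (σ : ℝ × ℝ → Bool) (hl : σ (a, d) → σ (a, c))
    (hr : σ (b, d) → σ (b, c)) :
    (∀ e, σ (rectEdgeEnds a b c d e).1 = σ (rectEdgeEnds a b c d e).2) ∨
      ∃ e₁ e₂, e₁ ≠ e₂ ∧ ∀ e, (σ (rectEdgeEnds a b c d e).1 ≠ σ (rectEdgeEnds a b c d e).2 ↔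
        e = e₁ ∨ e = e₂) := by
  have hstart (e : Fin 4) :
      σ (rectEdgeEnds a b c d e).1 = ![σ (a, c), σ (a, d), σ (a, c), σ (b, c)] e := by
    fin_cases e <;> rfl
  have hend (e : Fin 4) :
      σ (rectEdgeEnds a b c d e).2 = ![σ (b, c), σ (b, d), σ (a, d), σ (b, d)] e := by
    fin_cases e <;> rfl
  simp only [hstart, hend]
  clear hstart hend
  generalize σ (a, c) = α, σ (b, c) = β, σ (b, d) = γ, σ (a, d) = δ at hl hr ⊢
  revert α β γ δ
  decide

theorem setOf_mem_rectEdge_eq_subsingleton_and_nonempty_iff {φ : ℝ × ℝ → ℝ} {t : ℝ}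
    (hab : a ≤ b) (hcd : c ≤ d) {e : Fin 4} {g : ℝ × ℝ →ᵃ[ℝ] ℝ}
    (hg : EqOn φ g (rectEdge a b c d e)) (hstart : φ (rectEdgeEnds a b c d e).1 ≠ t)
    (hend : φ (rectEdgeEnds a b c d e).2 ≠ t) :
    {p ∈ rectEdge a b c d e | φ p = t}.Subsingleton ∧
      ({p ∈ rectEdge a b c d e | φ p = t}.Nonempty ↔
        ¬(φ (rectEdgeEnds a b c d e).1 < t ↔ φ (rectEdgeEnds a b c d e).2 < t)) := by
  rw [rectEdge_eq_segment hab hcd] at hg ⊢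
  generalize (rectEdgeEnds a b c d e).1 = p, (rectEdgeEnds a b c d e).2 = q at *
  have hLg : {z ∈ segment ℝ p q | φ z = t} = {z ∈ segment ℝ p q | g z = t} := by
    ext z
    exact and_congr_right fun hz => by rw [hg hz]
  rw [hLg, hg (left_mem_segment ℝ p q), hg (right_mem_segment ℝ p q)]
  rw [hg (left_mem_segment ℝ p q)] at hstart
  rw [hg (right_mem_segment ℝ p q)] at hend
  exact ⟨g.subsingleton_setOf_mem_segment_eq hstart, g.exists_mem_segment_eq_iff hstart hend⟩

theorem setOf_mem_frontier_rect_eq_empty_or_pair {φ : ℝ × ℝ → ℝ} {t : ℝ} (hab : a < b)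
    (hcd : c < d) (haff : ∀ e, ∃ g : ℝ × ℝ →ᵃ[ℝ] ℝ, EqOn φ g (rectEdge a b c d e))
    (hcorner : ∀ p ∈ ({a, b} ×ˢ {c, d} : Set (ℝ × ℝ)), φ p ≠ t)
    (hleft : φ (a, c) ≤ φ (a, d)) (hright : φ (b, c) ≤ φ (b, d)) :
    {p ∈ frontier (Icc a b ×ˢ Icc c d) | φ p = t} = ∅ ∨
    ∃ p₁ p₂ : ℝ × ℝ, p₁ ≠ p₂ ∧
      {p ∈ frontier (Icc a b ×ˢ Icc c d) | φ p = t} = {p₁, p₂} ∧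
      ∃ e₁ e₂ : Fin 4, e₁ ≠ e₂ ∧ p₁ ∈ rectEdge a b c d e₁ ∧ p₂ ∈ rectEdge a b c d e₂ := by
  set L : Fin 4 → Set (ℝ × ℝ) := fun e => {p ∈ rectEdge a b c d e | φ p = t}
  set σ : ℝ × ℝ → Bool := fun p => decide (φ p < t)
  have hunion : {p ∈ frontier (Icc a b ×ˢ Icc c d) | φ p = t} = ⋃ e, L e := by
    rw [frontier_Icc_prod_Icc hab.le hcd.le]
    ext p
    simp [L]
  have hL : ∀ e, (L e).Subsingleton ∧
      ((L e).Nonempty ↔ σ (rectEdgeEnds a b c d e).1 ≠ σ (rectEdgeEnds a b c d e).2) := by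
    intro e
    obtain ⟨g, hg⟩ := haff e
    obtain ⟨hp, hq⟩ := rectEdgeEnds_mem_corners (a := a) (b := b) (c := c) (d := d) e
    simpa only [σ, ne_eq, decide_eq_decide] using
      setOf_mem_rectEdge_eq_subsingleton_and_nonempty_iff hab.le hcd.le hg (hcorner _ hp)
        (hcorner _ hq)
  have hl : σ (a, d) → σ (a, c) := by simpa [σ] using fun h => hleft.trans_lt h
  have hr : σ (b, d) → σ (b, c) := by simpa [σ] using fun h => hright.trans_lt h
  rw [hunion]
  rcases rectEdgeEnds_crossings_eq_none_or_pair σ hl hr with hnone | ⟨e₁, e₂, hne, hcross⟩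
  · left
    refine iUnion_eq_empty.2 fun e => not_nonempty_iff_eq_empty.1 fun hne => ?_
    exact (hL e).2.1 hne (hnone e)
  · right
    obtain ⟨p₁, hp₁⟩ := (hL e₁).2.2 ((hcross e₁).2 (Or.inl rfl))
    obtain ⟨p₂, hp₂⟩ := (hL e₂).2.2 ((hcross e₂).2 (Or.inr rfl))
    refine ⟨p₁, p₂, ?_, ?_, e₁, e₂, hne, hp₁.1, hp₂.1⟩
    · rintro rfl
      exact hcorner p₁ (rectEdge_inter_subset_corners hab hcd hne ⟨hp₁.1, hp₂.1⟩) hp₁.2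
    · ext p
      simp only [mem_iUnion, mem_insert_iff, mem_singleton_iff]
      constructor
      · rintro ⟨e, hp⟩
        rcases (hcross e).1 ((hL e).2.1 ⟨p, hp⟩) with rfl | rfl
        exacts [Or.inl ((hL _).1 hp hp₁), Or.inr ((hL _).1 hp hp₂)]
      · rintro (rfl | rfl)
        exacts [⟨e₁, hp₁⟩, ⟨e₂, hp₂⟩]

end Rectangle

theorem rectEdge_subset_lowerTri_or_upperTri (N k l : ℕ) (e : Fin 4) :
    rectEdge (k / N) ((k + 1) / N) (l / N) ((l + 1) / N) e ⊆ lowerTri N k l ∨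
      rectEdge (k / N) ((k + 1) / N) (l / N) ((l + 1) / N) e ⊆ upperTri N k l := by
  have hdiag₁ : ((k : ℝ) + l + 1) / N = (k + 1) / N + l / N := by ring
  have hdiag₂ : ((k : ℝ) + l + 1) / N = k / N + (l + 1) / N := by ring
  fin_cases e
  · left
    rintro ⟨x, y⟩ ⟨⟨hx, hx'⟩, rfl : y = _⟩
    exact ⟨hx, le_rfl, by linarith⟩
  · right
    rintro ⟨x, y⟩ ⟨⟨hx, hx'⟩, rfl : y = _⟩
    exact ⟨hx', le_rfl, by linarith⟩
  · left
    rintro ⟨x, y⟩ ⟨rfl : x = _, ⟨hy, hy'⟩⟩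
    exact ⟨le_rfl, hy, by linarith⟩
  · right
    rintro ⟨x, y⟩ ⟨rfl : x = _, ⟨hy, hy'⟩⟩
    exact ⟨le_rfl, hy', by linarith⟩

theorem IsPWAffine.exists_affineMap_eqOn_rectEdge {N : ℕ} {f : ℝ × ℝ → Fin 3 → ℝ}
    (hpa : IsPWAffine N f) {k l : ℕ} (hk : k < N) (hl : l < N) (i : Fin 3) (e : Fin 4) :
    ∃ g : ℝ × ℝ →ᵃ[ℝ] ℝ,
      EqOn (fun p => f p i) g (rectEdge (k / N) ((k + 1) / N) (l / N) ((l + 1) / N) e) := by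
  obtain ⟨⟨gL, hgL⟩, ⟨gU, hgU⟩⟩ := hpa k l hk hl
  rcases rectEdge_subset_lowerTri_or_upperTri N k l e with h | h
  · exact ⟨(LinearMap.proj i).toAffineMap.comp gL, fun p hp => by simp [hgL p (h hp)]⟩
  · exact ⟨(LinearMap.proj i).toAffineMap.comp gU, fun p hp => by simp [hgU p (h hp)]⟩

theorem stmt10_general (N : ℕ) (hN : 1 ≤ N) (t : ℝ)
    (f : ℝ × ℝ → Fin 3 → ℝ)
    (hpa : IsPWAffine N f)
    (hmono : ∀ k : ℕ, k ≤ N → ∀ y y' : ℝ, 0 ≤ y → y ≤ y' → y' ≤ 1 →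
      f ((k : ℝ) / N, y) 0 ≤ f ((k : ℝ) / N, y') 0)
    (hvne : ∀ k l : ℕ, k ≤ N → l ≤ N → f ((k : ℝ) / N, (l : ℝ) / N) 0 ≠ t)
    (k l : ℕ) (hk : k < N) (hl : l < N) :
    {p ∈ frontier (basicSquare N k l) | f p 0 = t} = ∅ ∨
    ∃ p₁ p₂ : ℝ × ℝ, p₁ ≠ p₂ ∧
      {p ∈ frontier (basicSquare N k l) | f p 0 = t} = {p₁, p₂} ∧
      ∃ e₁ e₂ : Fin 4, e₁ ≠ e₂ ∧ p₁ ∈ squareEdge N k l e₁ ∧ p₂ ∈ squareEdge N k l e₂ := by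
  have hN' : (0 : ℝ) < N := by exact_mod_cast hN
  have hstep (m : ℕ) : (m : ℝ) / N < (m + 1) / N := by gcongr; linarith
  have hl1 : ((l : ℝ) + 1) / N ≤ 1 := by
    rw [div_le_one hN']
    exact_mod_cast hl
  have hmono' (m : ℕ) (hm : m ≤ N) := hmono m hm (l / N) ((l + 1) / N) (by positivity)
    (hstep l).le hl1
  have hcorner : ∀ p ∈ ({(k : ℝ) / N, ((k : ℝ) + 1) / N} ×ˢ {(l : ℝ) / N, ((l : ℝ) + 1) / N} :
      Set (ℝ × ℝ)), f p 0 ≠ t := by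
    rintro ⟨x, y⟩ ⟨rfl | rfl, rfl | rfl⟩
    · exact hvne k l hk.le hl.le
    · simpa using hvne k (l + 1) hk.le hl
    · simpa using hvne (k + 1) l hk hl.le
    · simpa using hvne (k + 1) (l + 1) hk hl
  exact setOf_mem_frontier_rect_eq_empty_or_pair (hstep k) (hstep l)
    (hpa.exists_affineMap_eqOn_rectEdge hk hl 0) hcorner (hmono' k hk.le)
    (by simpa using hmono' (k + 1) hk)

/-- Lemma: the level set `f₁ = t` meets the boundary of a basic square in
zero or exactly two points. Fix `N ≥ 1`, `t ∈ (0,1)`, and a `T`-piecewise affine map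
`f : [0,1]² → Δ²` vertically monotone at every `x = k/N` with `f₁(v) ≠ t` at every grid
vertex `v`. Then for every basic square `S`, either no point of `∂S` satisfies `f₁ = t`, or
`{p ∈ ∂S : f₁(p) = t}` consists of exactly two points, lying on two distinct edges of `S`. -/
theorem stmt10 (N : ℕ) (hN : 1 ≤ N) (t : ℝ) (ht : t ∈ Set.Ioo (0 : ℝ) 1)
    (f : ℝ × ℝ → Fin 3 → ℝ)
    (hpa : IsPWAffine N f)
    (hmem : ∀ p : ℝ × ℝ, p ∈ Set.Icc (0 : ℝ) 1 ×ˢ Set.Icc (0 : ℝ) 1 →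
      f p ∈ stdSimplex ℝ (Fin 3))
    (hmono : ∀ k : ℕ, k ≤ N → ∀ y y' : ℝ, 0 ≤ y → y ≤ y' → y' ≤ 1 →
      f ((k : ℝ) / N, y) 0 ≤ f ((k : ℝ) / N, y') 0)
    (hvne : ∀ k l : ℕ, k ≤ N → l ≤ N → f ((k : ℝ) / N, (l : ℝ) / N) 0 ≠ t)
    (k l : ℕ) (hk : k < N) (hl : l < N) :
    {p ∈ frontier (basicSquare N k l) | f p 0 = t} = ∅ ∨
    ∃ p₁ p₂ : ℝ × ℝ, p₁ ≠ p₂ ∧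
      {p ∈ frontier (basicSquare N k l) | f p 0 = t} = {p₁, p₂} ∧
      ∃ e₁ e₂ : Fin 4, e₁ ≠ e₂ ∧ p₁ ∈ squareEdge N k l e₁ ∧ p₂ ∈ squareEdge N k l e₂ :=
  stmt10_general N hN t f hpa hmono hvne k l hk hl
end

section
/- Fix an integer N ≥ 1 and the triangulation T of [0,1]² described in the context, and let t ∈ (0,1). Set ω = (t, (1−t)/2, (1−t)/2), L = {z ∈ Δ² : z_1 = t, z_2 ≤ (1−t)/2}, and R = {z ∈ Δ² : z_1 = t, z_2 ≥ (1−t)/2}. Let f : [0,1]² → Δ² be T-piecewise affine, vertically monotone at every x = k/N (k ∈ {0,…,N}), with f_1(v) ≠ t for every grid vertex v. If S is a basic square such that f(∂S) intersects both L and R, then ω belongs to f(S). -/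
/-- The left half `L` of the segment `{z ∈ Δ² : z₁ = t}`, i.e. the part with
`z₂ ≤ (1−t)/2`. -/
def leftHalf (t : ℝ) : Set (Fin 3 → ℝ) :=
  {z | z ∈ stdSimplex ℝ (Fin 3) ∧ z 0 = t ∧ z 1 ≤ (1 - t) / 2}

/-- The right half `R` of the segment `{z ∈ Δ² : z₁ = t}`, i.e. the part with
`z₂ ≥ (1−t)/2`. -/
def rightHalf (t : ℝ) : Set (Fin 3 → ℝ) :=
  {z | z ∈ stdSimplex ℝ (Fin 3) ∧ z 0 = t ∧ (1 - t) / 2 ≤ z 1}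

open Set

/-!
On each triangle of `T` the first coordinate `f₁` is affine, hence its sign on the triangle is
controlled by its values at the vertices. On the lower triangle of `S` these are the values at
the two ends of the diagonal and at the bottom-left corner, which by vertical monotonicity is at
most the value at the top-left end; symmetrically on the upper triangle. So if `f₁ - t` has the
same sign at both ends of the diagonal, one of the triangles misses the line `z₁ = t` and the
two given boundary points lie in the other one; otherwise `f₁ = t` at some point `r` of the
diagonal, and `f(r)` lies in `L` or in `R`, so it can be paired with one of the given points.
In either case two points of a single triangle are mapped by an affine map into `L` and `R`
respectively, and the image of the segment joining them crosses `ω`.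
-/

lemma omega_mem_segment {t : ℝ} {z w : Fin 3 → ℝ} (hz : z ∈ leftHalf t) (hw : w ∈ rightHalf t) :
    ![t, (1 - t) / 2, (1 - t) / 2] ∈ segment ℝ z w := by
  obtain ⟨hzΔ, hz0, hz1⟩ := hz
  obtain ⟨hwΔ, hw0, hw1⟩ := hw
  obtain ⟨a, b, ha, hb, hab, h1⟩ : (1 - t) / 2 ∈ segment ℝ (z 1) (w 1) := by
    rw [segment_eq_Icc (hz1.trans hw1)]
    exact ⟨hz1, hw1⟩
  have hzsum : z 0 + z 1 + z 2 = 1 := by simpa [Fin.sum_univ_three] using hzΔ.2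
  have hwsum : w 0 + w 1 + w 2 = 1 := by simpa [Fin.sum_univ_three] using hwΔ.2
  refine ⟨a, b, ha, hb, hab, funext fun i => ?_⟩
  simp only [smul_eq_mul] at h1
  fin_cases i <;> simp only [Fin.reduceFinMk, Fin.isValue, Pi.add_apply, Pi.smul_apply, smul_eq_mul,
    Matrix.cons_val]
  · linear_combination a * hz0 + b * hw0 + t * hab
  · exact h1
  · linear_combination a * hzsum + b * hwsum - a * hz0 - b * hw0 - h1 + (1 - t) * hab

section AffinePieces

variable {E : Type*} [AddCommGroup E] [Module ℝ E]

lemma omega_mem_image_of_eqOn_affineMap {C : Set E} (hC : Convex ℝ C) {f : E → Fin 3 → ℝ}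
    {g : E →ᵃ[ℝ] (Fin 3 → ℝ)} (hfg : EqOn f g C) {t : ℝ} {p q : E} (hp : p ∈ C) (hq : q ∈ C)
    (hpL : f p ∈ leftHalf t) (hqR : f q ∈ rightHalf t) :
    ![t, (1 - t) / 2, (1 - t) / 2] ∈ f '' C := by
  rw [hfg.image_eq]
  apply image_mono (hC.segment_subset hp hq)
  rw [image_segment, ← hfg hp, ← hfg hq]
  exact omega_mem_segment hpL hqR

lemma omega_mem_image_union_of_mem_inter {C C' : Set E} (hC : Convex ℝ C) (hC' : Convex ℝ C')
    {f : E → Fin 3 → ℝ} {g g' : E →ᵃ[ℝ] (Fin 3 → ℝ)} (hfg : EqOn f g C) (hfg' : EqOn f g' C')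
    {t : ℝ} {r p q : E} (hr : r ∈ C ∩ C') (hrΔ : f r ∈ stdSimplex ℝ (Fin 3)) (hrt : f r 0 = t)
    (hp : p ∈ C ∪ C') (hq : q ∈ C ∪ C') (hpL : f p ∈ leftHalf t) (hqR : f q ∈ rightHalf t) :
    ![t, (1 - t) / 2, (1 - t) / 2] ∈ f '' (C ∪ C') := by
  rcases le_total (f r 1) ((1 - t) / 2) with hr1 | hr1
  · have hrL : f r ∈ leftHalf t := ⟨hrΔ, hrt, hr1⟩
    rcases hq with hq | hq
    · exact image_mono subset_union_left
        (omega_mem_image_of_eqOn_affineMap hC hfg hr.1 hq hrL hqR)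
    · exact image_mono subset_union_right
        (omega_mem_image_of_eqOn_affineMap hC' hfg' hr.2 hq hrL hqR)
  · have hrR : f r ∈ rightHalf t := ⟨hrΔ, hrt, hr1⟩
    rcases hp with hp | hp
    · exact image_mono subset_union_left
        (omega_mem_image_of_eqOn_affineMap hC hfg hp hr.1 hpL hrR)
    · exact image_mono subset_union_right
        (omega_mem_image_of_eqOn_affineMap hC' hfg' hp hr.2 hpL hrR)

lemma omega_mem_image_union_of_forall_ne {C C' : Set E} (hC' : Convex ℝ C')
    {f : E → Fin 3 → ℝ} {g' : E →ᵃ[ℝ] (Fin 3 → ℝ)} (hfg' : EqOn f g' C') {t : ℝ}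
    (hC : ∀ x ∈ C, f x 0 ≠ t) {p q : E} (hp : p ∈ C ∪ C') (hq : q ∈ C ∪ C')
    (hpL : f p ∈ leftHalf t) (hqR : f q ∈ rightHalf t) :
    ![t, (1 - t) / 2, (1 - t) / 2] ∈ f '' (C ∪ C') :=
  image_mono subset_union_right <| omega_mem_image_of_eqOn_affineMap hC' hfg'
    (hp.resolve_left fun h => hC p h hpL.2.1) (hq.resolve_left fun h => hC q h hqR.2.1) hpL hqR

lemma Set.EqOn.mapsTo_of_subset_convexHull {F : Type*} [AddCommGroup F] [Module ℝ F]
    {f : E → F} {g : E →ᵃ[ℝ] F} {s C : Set E} {K : Set F} (hfg : EqOn f g C) (hsC : s ⊆ C)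
    (hCs : C ⊆ convexHull ℝ s) (hK : Convex ℝ K) (hs : MapsTo f s K) : MapsTo f C K := by
  intro x hx
  rw [hfg hx]
  refine convexHull_min (fun y hy => ?_) (hK.affine_preimage g) (hCs hx)
  rw [mem_preimage, ← hfg (hsC hy)]
  exact hs hy

lemma exists_mem_segment_apply_eq {ι : Type*} (g : E →ᵃ[ℝ] (ι → ℝ)) (i : ι) {x y : E} {t : ℝ}
    (ht : t ∈ uIcc (g x i) (g y i)) : ∃ r ∈ segment ℝ x y, g r i = t := by
  rw [← segment_eq_uIcc, ← AffineMap.proj_apply (k := ℝ) i (g x),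
    ← AffineMap.proj_apply (k := ℝ) i (g y), ← AffineMap.comp_apply, ← AffineMap.comp_apply,
    ← image_segment] at ht
  exact ht

lemma smul_add_smul_add_smul_mem_convexHull {a b c : ℝ} (ha : 0 ≤ a) (hb : 0 ≤ b) (hc : 0 ≤ c)
    (habc : a + b + c = 1) (x y z : E) : a • x + b • y + c • z ∈ convexHull ℝ {x, y, z} := by
  have := (convex_convexHull ℝ {x, y, z}).sum_mem (t := Finset.univ) (w := ![a, b, c])
    (z := ![x, y, z]) (by simp [Fin.forall_fin_succ, ha, hb, hc])
    (by simp [Fin.sum_univ_three, habc])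
    (fun i _ => subset_convexHull ℝ _ (by fin_cases i <;> simp))
  simpa [Fin.sum_univ_three] using this

end AffinePieces

noncomputable def gridPoint (N i j : ℕ) : ℝ × ℝ := ((i : ℝ) / N, (j : ℝ) / N)

lemma basicSquare_subset_unitSquare {N k l : ℕ} (hk : k < N) (hl : l < N) :
    basicSquare N k l ⊆ Icc (0 : ℝ) 1 ×ˢ Icc (0 : ℝ) 1 := by
  have hN : (0 : ℝ) < N := by exact_mod_cast hk.pos
  have hk1 : (k : ℝ) + 1 ≤ N := by exact_mod_cast hk
  have hl1 : (l : ℝ) + 1 ≤ N := by exact_mod_cast hl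
  rintro p ⟨⟨h1, h2⟩, h3, h4⟩
  exact ⟨⟨(by positivity : (0 : ℝ) ≤ k / N).trans h1, h2.trans (div_le_one_of_le₀ hk1 hN.le)⟩,
    (by positivity : (0 : ℝ) ≤ l / N).trans h3, h4.trans (div_le_one_of_le₀ hl1 hN.le)⟩

section BasicSquare

variable (N k l : ℕ)

lemma convex_lowerTri : Convex ℝ (lowerTri N k l) :=
  (convex_halfSpace_ge (LinearMap.fst ℝ ℝ ℝ).isLinear _).inter
    ((convex_halfSpace_ge (LinearMap.snd ℝ ℝ ℝ).isLinear _).inter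
      (convex_halfSpace_le (LinearMap.fst ℝ ℝ ℝ + LinearMap.snd ℝ ℝ ℝ).isLinear _))

lemma convex_upperTri : Convex ℝ (upperTri N k l) :=
  (convex_halfSpace_le (LinearMap.fst ℝ ℝ ℝ).isLinear _).inter
    ((convex_halfSpace_le (LinearMap.snd ℝ ℝ ℝ).isLinear _).inter
      (convex_halfSpace_ge (LinearMap.fst ℝ ℝ ℝ + LinearMap.snd ℝ ℝ ℝ).isLinear _))

lemma lowerTri_subset_basicSquare : lowerTri N k l ⊆ basicSquare N k l := by
  rintro p ⟨h1, h2, h3⟩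
  have : (0 : ℝ) ≤ 1 / N := by positivity
  simp only [basicSquare, mem_prod, mem_Icc, add_div] at h3 ⊢
  exact ⟨⟨h1, by linarith⟩, h2, by linarith⟩

lemma upperTri_subset_basicSquare : upperTri N k l ⊆ basicSquare N k l := by
  rintro p ⟨h1, h2, h3⟩
  have : (0 : ℝ) ≤ 1 / N := by positivity
  simp only [basicSquare, mem_prod, mem_Icc, add_div] at h1 h2 h3 ⊢
  exact ⟨⟨by linarith, h1⟩, by linarith, h2⟩

lemma basicSquare_subset_lowerTri_union_upperTri :
    basicSquare N k l ⊆ lowerTri N k l ∪ upperTri N k l := by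
  rintro p ⟨⟨h1, h2⟩, h3, h4⟩
  rcases le_total (p.1 + p.2) (((k : ℝ) + l + 1) / N) with h | h
  · exact Or.inl ⟨h1, h3, h⟩
  · exact Or.inr ⟨h2, h4, h⟩

lemma corners_subset_lowerTri :
    {gridPoint N k l, gridPoint N (k + 1) l, gridPoint N k (l + 1)} ⊆ lowerTri N k l := by
  have : (0 : ℝ) ≤ 1 / N := by positivity
  rintro _ (rfl | rfl | rfl) <;>
    refine ⟨?_, ?_, ?_⟩ <;> simp only [gridPoint, Nat.cast_add, Nat.cast_one, add_div] <;> linarith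

lemma corners_subset_upperTri :
    {gridPoint N (k + 1) (l + 1), gridPoint N (k + 1) l, gridPoint N k (l + 1)} ⊆
      upperTri N k l := by
  have : (0 : ℝ) ≤ 1 / N := by positivity
  rintro _ (rfl | rfl | rfl) <;>
    refine ⟨?_, ?_, ?_⟩ <;> simp only [gridPoint, Nat.cast_add, Nat.cast_one, add_div] <;> linarith

lemma segment_subset_lowerTri_inter_upperTri :
    segment ℝ (gridPoint N k (l + 1)) (gridPoint N (k + 1) l) ⊆ lowerTri N k l ∩ upperTri N k l :=
  ((convex_lowerTri N k l).inter (convex_upperTri N k l)).segment_subset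
    ⟨corners_subset_lowerTri N k l (by simp), corners_subset_upperTri N k l (by simp)⟩
    ⟨corners_subset_lowerTri N k l (by simp), corners_subset_upperTri N k l (by simp)⟩

variable {N}

lemma lowerTri_subset_convexHull (hN : 0 < N) :
    lowerTri N k l ⊆
      convexHull ℝ {gridPoint N k l, gridPoint N (k + 1) l, gridPoint N k (l + 1)} := by
  rintro p ⟨h1, h2, h3⟩
  have hN' : (0 : ℝ) < N := by exact_mod_cast hN
  rw [div_le_iff₀ hN'] at h1 h2
  rw [le_div_iff₀ hN'] at h3
  convert smul_add_smul_add_smul_mem_convexHull (a := 1 - (N * p.1 - k) - (N * p.2 - l))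
    (by linarith) (by linarith : 0 ≤ N * p.1 - k) (by linarith : 0 ≤ N * p.2 - l) (by ring) _ _ _
  ext <;> simp only [gridPoint, Nat.cast_add, Nat.cast_one, Prod.smul_mk, smul_eq_mul,
    Prod.mk_add_mk] <;> field_simp <;> ring

lemma upperTri_subset_convexHull (hN : 0 < N) :
    upperTri N k l ⊆
      convexHull ℝ {gridPoint N (k + 1) (l + 1), gridPoint N (k + 1) l, gridPoint N k (l + 1)} := by
  rintro p ⟨h1, h2, h3⟩
  have hN' : (0 : ℝ) < N := by exact_mod_cast hN
  rw [le_div_iff₀ hN'] at h1 h2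
  rw [div_le_iff₀ hN'] at h3
  convert smul_add_smul_add_smul_mem_convexHull (a := 1 - (l + 1 - N * p.2) - (k + 1 - N * p.1))
    (by linarith) (by linarith : 0 ≤ l + 1 - N * p.2) (by linarith : 0 ≤ k + 1 - N * p.1)
    (by ring) _ _ _
  ext <;> simp only [gridPoint, Nat.cast_add, Nat.cast_one, Prod.smul_mk, smul_eq_mul,
    Prod.mk_add_mk] <;> field_simp <;> ring

end BasicSquare

section SignOnTriangles

variable {N k l : ℕ} {f : ℝ × ℝ → Fin 3 → ℝ} {g : (ℝ × ℝ) →ᵃ[ℝ] (Fin 3 → ℝ)} {t : ℝ}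

lemma mapsTo_lowerTri_of_lt (hN : 0 < N) (hfg : EqOn f g (lowerTri N k l))
    (hA : f (gridPoint N k l) 0 ≤ f (gridPoint N k (l + 1)) 0)
    (hB : f (gridPoint N (k + 1) l) 0 < t) (hC : f (gridPoint N k (l + 1)) 0 < t) :
    MapsTo f (lowerTri N k l) {z | z 0 < t} :=
  hfg.mapsTo_of_subset_convexHull (corners_subset_lowerTri N k l)
    (lowerTri_subset_convexHull k l hN)
    (convex_halfSpace_lt (LinearMap.proj (R := ℝ) (φ := fun _ : Fin 3 => ℝ) 0).isLinear t)
    (by rintro _ (rfl | rfl | rfl) <;> simp only [mem_ofPred_eq] <;> linarith)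

lemma mapsTo_upperTri_of_gt (hN : 0 < N) (hfg : EqOn f g (upperTri N k l))
    (hD : f (gridPoint N (k + 1) l) 0 ≤ f (gridPoint N (k + 1) (l + 1)) 0)
    (hB : t < f (gridPoint N (k + 1) l) 0) (hC : t < f (gridPoint N k (l + 1)) 0) :
    MapsTo f (upperTri N k l) {z | t < z 0} :=
  hfg.mapsTo_of_subset_convexHull (corners_subset_upperTri N k l)
    (upperTri_subset_convexHull k l hN)
    (convex_halfSpace_gt (LinearMap.proj (R := ℝ) (φ := fun _ : Fin 3 => ℝ) 0).isLinear t)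
    (by rintro _ (rfl | rfl | rfl) <;> simp only [mem_ofPred_eq] <;> linarith)

lemma exists_mem_lowerTri_inter_upperTri_apply_eq (hfg : EqOn f g (lowerTri N k l))
    (ht : t ∈ uIcc (f (gridPoint N k (l + 1)) 0) (f (gridPoint N (k + 1) l) 0)) :
    ∃ r ∈ lowerTri N k l ∩ upperTri N k l, f r 0 = t := by
  have hdiag := segment_subset_lowerTri_inter_upperTri N k l
  rw [hfg (hdiag (left_mem_segment ℝ _ _)).1, hfg (hdiag (right_mem_segment ℝ _ _)).1] at ht
  obtain ⟨r, hr, hrt⟩ := exists_mem_segment_apply_eq g 0 ht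
  exact ⟨r, hdiag hr, by rw [hfg (hdiag hr).1, hrt]⟩

end SignOnTriangles

theorem stmt11_general (N : ℕ) (t : ℝ)
    (f : ℝ × ℝ → Fin 3 → ℝ)
    (hpa : IsPWAffine N f)
    (hmem : ∀ p : ℝ × ℝ, p ∈ Set.Icc (0 : ℝ) 1 ×ˢ Set.Icc (0 : ℝ) 1 →
      f p ∈ stdSimplex ℝ (Fin 3))
    (hmono : ∀ k : ℕ, k ≤ N → ∀ y y' : ℝ, 0 ≤ y → y ≤ y' → y' ≤ 1 →
      f ((k : ℝ) / N, y) 0 ≤ f ((k : ℝ) / N, y') 0)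
    (hvne : ∀ k l : ℕ, k ≤ N → l ≤ N → f ((k : ℝ) / N, (l : ℝ) / N) 0 ≠ t)
    (k l : ℕ) (hk : k < N) (hl : l < N)
    (hL : (f '' frontier (basicSquare N k l) ∩ leftHalf t).Nonempty)
    (hR : (f '' frontier (basicSquare N k l) ∩ rightHalf t).Nonempty) :
    ![t, (1 - t) / 2, (1 - t) / 2] ∈ f '' basicSquare N k l := by
  have hN : 0 < N := hk.pos
  obtain ⟨⟨gL, hgL : EqOn f gL (lowerTri N k l)⟩, ⟨gU, hgU : EqOn f gU (upperTri N k l)⟩⟩ :=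
    hpa k l hk hl
  have hfrontier : frontier (basicSquare N k l) ⊆ lowerTri N k l ∪ upperTri N k l :=
    (isClosed_Icc.prod isClosed_Icc).frontier_subset.trans
      (basicSquare_subset_lowerTri_union_upperTri N k l)
  obtain ⟨_, ⟨p, hp, rfl⟩, hpL⟩ := hL
  obtain ⟨_, ⟨q, hq, rfl⟩, hqR⟩ := hR
  replace hp := hfrontier hp
  replace hq := hfrontier hq
  refine image_mono (union_subset (lowerTri_subset_basicSquare N k l)
    (upperTri_subset_basicSquare N k l)) ?_
  have hcolumn : ∀ i ≤ N, f (gridPoint N i l) 0 ≤ f (gridPoint N i (l + 1)) 0 := fun i hi =>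
    hmono i hi _ _ (by positivity) (by gcongr; simp)
      (div_le_one_of_le₀ (by exact_mod_cast hl) (Nat.cast_nonneg _))
  have hdiag (ht : t ∈ uIcc (f (gridPoint N k (l + 1)) 0) (f (gridPoint N (k + 1) l) 0)) :
      ![t, (1 - t) / 2, (1 - t) / 2] ∈ f '' (lowerTri N k l ∪ upperTri N k l) := by
    obtain ⟨r, hr, hrt⟩ := exists_mem_lowerTri_inter_upperTri_apply_eq hgL ht
    have hrΔ := hmem r <|
      basicSquare_subset_unitSquare hk hl (lowerTri_subset_basicSquare N k l hr.1)
    exact omega_mem_image_union_of_mem_inter (convex_lowerTri N k l) (convex_upperTri N k l)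
      hgL hgU hr hrΔ hrt hp hq hpL hqR
  rcases (hvne k (l + 1) hk.le hl).lt_or_gt with hC | hC <;>
    rcases (hvne (k + 1) l hk hl.le).lt_or_gt with hB | hB
  · exact omega_mem_image_union_of_forall_ne (convex_upperTri N k l) hgU
      (fun x hx => (mapsTo_lowerTri_of_lt hN hgL (hcolumn k hk.le) hB hC hx).ne) hp hq hpL hqR
  · exact hdiag (mem_uIcc.2 (Or.inl ⟨hC.le, hB.le⟩))
  · exact hdiag (mem_uIcc.2 (Or.inr ⟨hB.le, hC.le⟩))
  · rw [union_comm] at hp hq ⊢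
    exact omega_mem_image_union_of_forall_ne (convex_lowerTri N k l) hgL
      (fun x hx => (mapsTo_upperTri_of_gt hN hgU (hcolumn (k + 1) hk) hB hC hx).ne') hp hq hpL hqR

/-- Lemma: a basic square whose boundary image meets both `L` and `R`
contains `ω` in its image. Fix `N ≥ 1`, `t ∈ (0,1)`, `ω = (t, (1−t)/2, (1−t)/2)`, and a
`T`-piecewise affine `f : [0,1]² → Δ²`, vertically monotone at every `x = k/N`, with
`f₁(v) ≠ t` at every grid vertex. If `S` is a basic square such that `f(∂S)` intersects both
`L` and `R`, then `ω ∈ f(S)`. -/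
theorem stmt11 (N : ℕ) (hN : 1 ≤ N) (t : ℝ) (ht : t ∈ Set.Ioo (0 : ℝ) 1)
    (f : ℝ × ℝ → Fin 3 → ℝ)
    (hpa : IsPWAffine N f)
    (hmem : ∀ p : ℝ × ℝ, p ∈ Set.Icc (0 : ℝ) 1 ×ˢ Set.Icc (0 : ℝ) 1 →
      f p ∈ stdSimplex ℝ (Fin 3))
    (hmono : ∀ k : ℕ, k ≤ N → ∀ y y' : ℝ, 0 ≤ y → y ≤ y' → y' ≤ 1 →
      f ((k : ℝ) / N, y) 0 ≤ f ((k : ℝ) / N, y') 0)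
    (hvne : ∀ k l : ℕ, k ≤ N → l ≤ N → f ((k : ℝ) / N, (l : ℝ) / N) 0 ≠ t)
    (k l : ℕ) (hk : k < N) (hl : l < N)
    (hL : (f '' frontier (basicSquare N k l) ∩ leftHalf t).Nonempty)
    (hR : (f '' frontier (basicSquare N k l) ∩ rightHalf t).Nonempty) :
    ![t, (1 - t) / 2, (1 - t) / 2] ∈ f '' basicSquare N k l :=
  stmt11_general N t f hpa hmem hmono hvne k l hk hl hL hR
end

section
/- Fix an integer N ≥ 1 and the triangulation T of [0,1]² described in the context, and let t ∈ (0,1). Set ω = (t, (1−t)/2, (1−t)/2). Let f : [0,1]² → Δ² be T-piecewise affine such that: f is vertically monotone at every x = k/N (k ∈ {0,…,N}); f_1(v) ≠ t for every grid vertex v; f_1(k/N, 0) < t < f_1(k/N, 1) for every k ∈ {0,…,N}; and for every y ∈ [0,1], f_1(0,y) = f_1(1,y), f_2(0,y) = f_3(1,y), and f_3(0,y) = f_2(1,y). Then there exists a point p ∈ [0,1]² such that f(p) = ω. -/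
/-!
Vertical monotonicity at the grid lines propagates, triangle by triangle, to every vertical line,
and the bounds `f₁ < t` on the bottom edge and `t < f₁` on the top edge propagate from the grid
vertices because `f` is affine on the triangles along these edges. Hence every vertical line meets
the level set `Z = {f₁ = t}`, and meets it in an interval. The sets of those `x` whose vertical line
meets `Z` at a point with `f₂ ≤ f₃`, resp. `f₂ ≥ f₃`, are closed (projections of compact sets),
cover `[0,1]`, and are both nonempty because the boundary symmetry swaps `f₂` and `f₃` between
`x = 0` and `x = 1`. By connectedness some `x` lies in both, and on that line the intermediate
value theorem for `f₂ - f₃` on the interval `Z ∩ ({x} × [0,1])` gives a point where `f₁ = t` and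
`f₂ = f₃`, that is, `f = ω`.
-/

open Set

lemma exists_cell {N : ℕ} (hN : 0 < N) {x : ℝ} (hx : x ∈ Icc (0 : ℝ) 1) :
    ∃ k < N, x ∈ Icc ((k : ℝ) / N) (((k : ℝ) + 1) / N) := by
  have hN' : (0 : ℝ) < N := by exact_mod_cast hN
  have hxN : 0 ≤ x * N := mul_nonneg hx.1 hN'.le
  rcases hx.2.lt_or_eq with hx1 | rfl
  · refine ⟨⌊x * N⌋₊, (Nat.floor_lt hxN).2 (mul_lt_of_lt_one_left hN' hx1), ?_, ?_⟩
    · rw [div_le_iff₀ hN']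
      exact Nat.floor_le hxN
    · rw [le_div_iff₀ hN']
      exact (Nat.lt_floor_add_one _).le
  · refine ⟨N - 1, by omega, ?_, ?_⟩ <;>
      rw [Nat.cast_pred hN] <;> field_simp <;> linarith

lemma isClosed_lowerTri (N k l : ℕ) : IsClosed (lowerTri N k l) :=
  (isClosed_le continuous_const continuous_fst).inter <|
    (isClosed_le continuous_const continuous_snd).inter <|
      isClosed_le (continuous_fst.add continuous_snd) continuous_const

lemma isClosed_upperTri (N k l : ℕ) : IsClosed (upperTri N k l) :=
  (isClosed_le continuous_fst continuous_const).inter <|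
    (isClosed_le continuous_snd continuous_const).inter <|
      isClosed_le continuous_const (continuous_fst.add continuous_snd)

lemma square_subset_iUnion_tri {N : ℕ} (hN : 0 < N) :
    Icc (0 : ℝ) 1 ×ˢ Icc (0 : ℝ) 1 ⊆
      ⋃ i : Fin N × Fin N, lowerTri N i.1 i.2 ∪ upperTri N i.1 i.2 := by
  rintro ⟨x, y⟩ ⟨hx, hy⟩
  obtain ⟨k, hk, hkx⟩ := exists_cell hN hx
  obtain ⟨l, hl, hly⟩ := exists_cell hN hy
  refine mem_iUnion.2 ⟨(⟨k, hk⟩, ⟨l, hl⟩), ?_⟩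
  rcases le_total (x + y) (((k : ℝ) + l + 1) / N) with h | h
  · exact Or.inl ⟨hkx.1, hly.1, h⟩
  · exact Or.inr ⟨hkx.2, hly.2, h⟩

lemma AffineMap.apply_mk_snd (g : ℝ × ℝ →ᵃ[ℝ] ℝ) (x y y' : ℝ) :
    g (x, y') = g (x, y) + (y' - y) * g.linear (0, 1) := by
  have h : ((x, y') : ℝ × ℝ) = (y' - y) • ((0 : ℝ), (1 : ℝ)) +ᵥ (x, y) := by
    simp
  rw [h, AffineMap.map_vadd, g.linear.map_smul, smul_eq_mul, vadd_eq_add, add_comm]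

lemma AffineMap.monotone_mk_of_le (g : ℝ × ℝ →ᵃ[ℝ] ℝ) {x₀ a b : ℝ} (hab : a < b)
    (h : g (x₀, a) ≤ g (x₀, b)) (x : ℝ) : Monotone fun y => g (x, y) := by
  rw [g.apply_mk_snd x₀ a b, le_add_iff_nonneg_right] at h
  have hslope : 0 ≤ g.linear (0, 1) := nonneg_of_mul_nonneg_right h (sub_pos.2 hab)
  intro y y' hyy'
  show g (x, y) ≤ g (x, y')
  rw [g.apply_mk_snd x y y']
  exact le_add_of_nonneg_right (mul_nonneg (sub_nonneg.2 hyy') hslope)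

lemma AffineMap.mk_mem_of_mem_Icc (g : ℝ × ℝ →ᵃ[ℝ] ℝ) {S : Set ℝ} (hS : Convex ℝ S)
    {a b x y : ℝ} (ha : g (a, y) ∈ S) (hb : g (b, y) ∈ S) (hx : x ∈ Icc a b) : g (x, y) ∈ S := by
  have hseg : (x, y) ∈ segment ℝ (a, y) (b, y) := by
    rw [← Prod.image_mk_segment_left, segment_eq_Icc (hx.1.trans hx.2)]
    exact mem_image_of_mem _ hx
  exact (hS.affine_preimage g).segment_subset ha hb hseg

namespace IsPWAffine

variable {N : ℕ} {f : ℝ × ℝ → Fin 3 → ℝ}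

lemma continuousOn (hf : IsPWAffine N f) (hN : 0 < N) :
    ContinuousOn f (Icc (0 : ℝ) 1 ×ˢ Icc (0 : ℝ) 1) := by
  refine (LocallyFinite.continuousOn_iUnion (locallyFinite_of_finite _)
    (fun i => (isClosed_lowerTri _ _ _).union (isClosed_upperTri _ _ _)) fun i => ?_).mono
    (square_subset_iUnion_tri hN)
  obtain ⟨⟨g, hg⟩, ⟨g', hg'⟩⟩ := hf i.1 i.2 i.1.2 i.2.2
  exact (g.continuous_of_finiteDimensional.continuousOn.congr hg).union_of_isClosed
    (g'.continuous_of_finiteDimensional.continuousOn.congr hg')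
    (isClosed_lowerTri _ _ _) (isClosed_upperTri _ _ _)

lemma exists_affine_coord (hf : IsPWAffine N f) (i : Fin 3) {k l : ℕ} (hk : k < N) (hl : l < N) :
    (∃ g : ℝ × ℝ →ᵃ[ℝ] ℝ, EqOn (f · i) g (lowerTri N k l)) ∧
      ∃ g : ℝ × ℝ →ᵃ[ℝ] ℝ, EqOn (f · i) g (upperTri N k l) := by
  obtain ⟨⟨g, hg⟩, ⟨g', hg'⟩⟩ := hf k l hk hl
  exact ⟨⟨(LinearMap.proj i).toAffineMap.comp g, fun p hp => by simp [hg p hp]⟩,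
    ⟨(LinearMap.proj i).toAffineMap.comp g', fun p hp => by simp [hg' p hp]⟩⟩

lemma monotoneOn_cell (hf : IsPWAffine N f) {i : Fin 3}
    (hmono : ∀ k ≤ N, MonotoneOn (fun y => f ((k : ℝ) / N, y) i) (Icc 0 1))
    {k l : ℕ} (hk : k < N) (hl : l < N) {x : ℝ} (hx : x ∈ Icc ((k : ℝ) / N) (((k : ℝ) + 1) / N)) :
    MonotoneOn (fun y => f (x, y) i) (Icc ((l : ℝ) / N) (((l : ℝ) + 1) / N)) := by
  have hN : (0 : ℝ) < N := by exact_mod_cast Nat.zero_lt_of_lt hk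
  obtain ⟨⟨g, hg⟩, ⟨g', hg'⟩⟩ := hf.exists_affine_coord i hk hl
  have hl1 : ((l : ℝ) + 1) / N ≤ 1 := by
    rw [div_le_one hN]; exact_mod_cast hl
  have hstep : (l : ℝ) / N < ((l : ℝ) + 1) / N := by gcongr; linarith
  have hgrid : ∀ j ≤ N, f ((j : ℝ) / N, (l : ℝ) / N) i ≤ f ((j : ℝ) / N, ((l : ℝ) + 1) / N) i :=
    fun j hj => hmono j hj ⟨by positivity, by linarith⟩ ⟨by positivity, hl1⟩ hstep.le
  simp only [lowerTri, upperTri, EqOn, add_div, mem_Icc] at hg hg' hx hstep hgrid ⊢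
  have hlow : Monotone fun y => g (x, y) := g.monotone_mk_of_le hstep (x₀ := k / N)
    (by rw [← hg ⟨le_rfl, le_rfl, by linarith⟩, ← hg ⟨le_rfl, by linarith, by linarith⟩]
        exact hgrid k hk.le) x
  have hup : Monotone fun y => g' (x, y) := g'.monotone_mk_of_le hstep (x₀ := k / N + 1 / N)
    (by rw [← hg' ⟨le_rfl, by linarith, by linarith⟩, ← hg' ⟨le_rfl, le_rfl, by linarith⟩]
        simpa [add_div] using hgrid (k + 1) hk) x
  -- the line `{x} × ℝ` crosses the diagonal of the cell at height `c`
  set c := (k : ℝ) / N + l / N + 1 / N - x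
  rw [← Icc_union_Icc_eq_Icc (b := c) (by linarith) (by linarith)]
  exact MonotoneOn.union_right
    ((hlow.monotoneOn _).congr fun y hy => (hg ⟨hx.1, hy.1, by linarith [hy.2]⟩).symm)
    ((hup.monotoneOn _).congr fun y hy => (hg' ⟨hx.2, hy.2, by linarith [hy.1]⟩).symm)
    (isGreatest_Icc (by linarith)) (isLeast_Icc (by linarith))

lemma monotoneOn_fiber (hf : IsPWAffine N f) (hN : 0 < N) {i : Fin 3}
    (hmono : ∀ k ≤ N, MonotoneOn (fun y => f ((k : ℝ) / N, y) i) (Icc 0 1))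
    {x : ℝ} (hx : x ∈ Icc (0 : ℝ) 1) :
    MonotoneOn (fun y => f (x, y) i) (Icc 0 1) := by
  obtain ⟨k, hk, hkx⟩ := exists_cell hN hx
  have key : ∀ l ≤ N, MonotoneOn (fun y => f (x, y) i) (Icc 0 ((l : ℝ) / N)) := by
    intro l hl
    induction l with
    | zero => simp
    | succ l ih =>
      rw [Nat.cast_succ, ← Icc_union_Icc_eq_Icc (b := (l : ℝ) / N) (by positivity)
        (by gcongr; linarith)]
      exact (ih (by omega)).union_right (hf.monotoneOn_cell hmono hk hl hkx)
        (isGreatest_Icc (by positivity)) (isLeast_Icc (by gcongr; linarith))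
  simpa [div_self (Nat.cast_ne_zero.2 hN.ne' : (N : ℝ) ≠ 0)] using key N le_rfl

lemma mem_of_grid_mem_edge (hf : IsPWAffine N f) (hN : 0 < N) {i : Fin 3} {S : Set ℝ}
    (hS : Convex ℝ S) {y : ℝ} (hy : y = 0 ∨ y = 1) (hgrid : ∀ k ≤ N, f ((k : ℝ) / N, y) i ∈ S)
    {x : ℝ} (hx : x ∈ Icc (0 : ℝ) 1) : f (x, y) i ∈ S := by
  have hN' : (0 : ℝ) < N := by exact_mod_cast hN
  obtain ⟨k, hk, hkx⟩ := exists_cell hN hx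
  obtain ⟨T, ⟨g, hg⟩, hT⟩ : ∃ T : Set (ℝ × ℝ), (∃ g : ℝ × ℝ →ᵃ[ℝ] ℝ, EqOn (f · i) g T) ∧
      ∀ x' ∈ Icc ((k : ℝ) / N) (((k : ℝ) + 1) / N), (x', y) ∈ T := by
    rcases hy with rfl | rfl
    · refine ⟨lowerTri N k 0, (hf.exists_affine_coord i hk hN).1, fun x' hx' => ?_⟩
      exact ⟨hx'.1, by simp, by simpa using hx'.2⟩
    · refine ⟨upperTri N k (N - 1), (hf.exists_affine_coord i hk (by omega)).2, fun x' hx' => ?_⟩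
      have htop : (((N - 1 : ℕ) : ℝ) + 1) / N = 1 := by
        rw [Nat.cast_pred hN, sub_add_cancel, div_self hN'.ne']
      have hdiag : ((k : ℝ) + (N - 1 : ℕ) + 1) / N = k / N + 1 := by
        rw [Nat.cast_pred hN]; field_simp; ring
      exact ⟨hx'.2, htop.ge, by rw [hdiag]; linarith [hx'.1]⟩
  have hkk : (k : ℝ) / N ≤ ((k : ℝ) + 1) / N := by gcongr; linarith
  have h0 := hgrid k hk.le
  have h1 := hgrid (k + 1) hk
  push_cast at h1
  rw [show f (x, y) i = g (x, y) from hg (hT x hkx)]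
  exact g.mk_mem_of_mem_Icc hS (hg (hT _ ⟨le_rfl, hkk⟩) ▸ h0) (hg (hT _ ⟨hkk, le_rfl⟩) ▸ h1) hkx

lemma exists_mem_Icc_apply_eq (hf : IsPWAffine N f) (hN : 0 < N) {i : Fin 3} {t : ℝ}
    (hbd : ∀ k ≤ N, f ((k : ℝ) / N, 0) i < t ∧ t < f ((k : ℝ) / N, 1) i)
    {x : ℝ} (hx : x ∈ Icc (0 : ℝ) 1) : ∃ y ∈ Icc (0 : ℝ) 1, f (x, y) i = t := by
  have hbot : f (x, 0) i < t :=
    hf.mem_of_grid_mem_edge hN (convex_Iio t) (Or.inl rfl) (fun k hk => (hbd k hk).1) hx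
  have htop : t < f (x, 1) i :=
    hf.mem_of_grid_mem_edge hN (convex_Ioi t) (Or.inr rfl) (fun k hk => (hbd k hk).2) hx
  have hcont : ContinuousOn (fun y => f (x, y) i) (Icc 0 1) :=
    (continuousOn_pi.1 (hf.continuousOn hN) i).comp (by fun_prop) fun y hy => ⟨hx, hy⟩
  exact intermediate_value_Icc zero_le_one hcont ⟨hbot.le, htop.le⟩

end IsPWAffine

lemma exists_fiber_sign_change {X Y : Type*} [TopologicalSpace X] [T2Space X]
    [TopologicalSpace Y] [T2Space Y] {S : Set X} (hS : IsPreconnected S) {Z : Set (X × Y)}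
    (hZ : IsCompact Z) {φ : X × Y → ℝ} (hφ : ContinuousOn φ Z) (hSZ : S ⊆ Prod.fst '' Z)
    {p q : X × Y} (hp : p ∈ Z) (hq : q ∈ Z) (hpS : p.1 ∈ S) (hqS : q.1 ∈ S)
    (hpq : φ q = -φ p) :
    ∃ x ∈ S, ∃ y₁ y₂ : Y, (x, y₁) ∈ Z ∧ (x, y₂) ∈ Z ∧ φ (x, y₁) ≤ 0 ∧ 0 ≤ φ (x, y₂) := by
  have hclosed : ∀ C : Set ℝ, IsClosed C → IsClosed (Prod.fst '' (Z ∩ φ ⁻¹' C)) := fun C hC =>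
    ((hZ.of_isClosed_subset (hφ.preimage_isClosed_of_isClosed hZ.isClosed hC)
      inter_subset_left).image continuous_fst).isClosed
  have hcover : S ⊆ Prod.fst '' (Z ∩ φ ⁻¹' Iic 0) ∪ Prod.fst '' (Z ∩ φ ⁻¹' Ici 0) := by
    intro x hx
    obtain ⟨z, hz, rfl⟩ := hSZ hx
    rcases le_total (φ z) 0 with h | h
    exacts [Or.inl ⟨z, ⟨hz, h⟩, rfl⟩, Or.inr ⟨z, ⟨hz, h⟩, rfl⟩]
  have hmeets : ∀ z ∈ Z, z.1 ∈ S → ∀ C : Set ℝ, φ z ∈ C →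
      (S ∩ Prod.fst '' (Z ∩ φ ⁻¹' C)).Nonempty :=
    fun z hz hzS C hC => ⟨z.1, hzS, z, ⟨hz, hC⟩, rfl⟩
  have hboth : (S ∩ (Prod.fst '' (Z ∩ φ ⁻¹' Iic 0) ∩ Prod.fst '' (Z ∩ φ ⁻¹' Ici 0))).Nonempty := by
    refine isPreconnected_closed_iff.1 hS _ _ (hclosed _ isClosed_Iic) (hclosed _ isClosed_Ici)
      hcover ?_ ?_ <;> rcases le_total (φ p) 0 with h | h
    · exact hmeets p hp hpS _ h
    · exact hmeets q hq hqS _ (show φ q ≤ 0 by linarith)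
    · exact hmeets q hq hqS _ (show 0 ≤ φ q by linarith)
    · exact hmeets p hp hpS _ h
  obtain ⟨_, hxS, ⟨⟨_, y₁⟩, ⟨h₁, hφ₁⟩, rfl⟩, ⟨⟨_, y₂⟩, ⟨h₂, hφ₂⟩, rfl : _ = _⟩⟩ := hboth
  exact ⟨_, hxS, y₁, y₂, h₁, h₂, hφ₁, hφ₂⟩

lemma exists_eq_and_eq_zero_of_monotoneOn {u φ : ℝ → ℝ} {s : Set ℝ} (hs : s.OrdConnected)
    (hu : MonotoneOn u s) (hφ : ContinuousOn φ s) {c y₁ y₂ : ℝ} (h₁ : y₁ ∈ s) (h₂ : y₂ ∈ s)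
    (hu₁ : u y₁ = c) (hu₂ : u y₂ = c) (hφ₁ : φ y₁ ≤ 0) (hφ₂ : 0 ≤ φ y₂) :
    ∃ y ∈ s, u y = c ∧ φ y = 0 := by
  have hsub : uIcc y₁ y₂ ⊆ s := hs.uIcc_subset h₁ h₂
  obtain ⟨y, hy, hφy⟩ := intermediate_value_uIcc (hφ.mono hsub) (mem_uIcc.2 (Or.inl ⟨hφ₁, hφ₂⟩))
  refine ⟨y, hsub hy, ?_, hφy⟩
  rcases mem_uIcc.1 hy with ⟨h1, h2⟩ | ⟨h1, h2⟩
  · exact le_antisymm (hu₂ ▸ hu (hsub hy) h₂ h2) (hu₁ ▸ hu h₁ (hsub hy) h1)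
  · exact le_antisymm (hu₁ ▸ hu (hsub hy) h₁ h2) (hu₂ ▸ hu h₂ (hsub hy) h1)

lemma eq_of_mem_stdSimplex {v : Fin 3 → ℝ} (hv : v ∈ stdSimplex ℝ (Fin 3)) {t : ℝ} (h0 : v 0 = t)
    (h12 : v 1 = v 2) : v = ![t, (1 - t) / 2, (1 - t) / 2] := by
  have hsum := hv.2
  rw [Fin.sum_univ_three] at hsum
  ext j
  fin_cases j <;> simp <;> linarith

theorem stmt12_general (N : ℕ) (hN : 1 ≤ N) (t : ℝ)
    (f : ℝ × ℝ → Fin 3 → ℝ)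
    (hpa : IsPWAffine N f)
    (hmem : ∀ p : ℝ × ℝ, p ∈ Set.Icc (0 : ℝ) 1 ×ˢ Set.Icc (0 : ℝ) 1 →
      f p ∈ stdSimplex ℝ (Fin 3))
    (hmono : ∀ k : ℕ, k ≤ N → ∀ y y' : ℝ, 0 ≤ y → y ≤ y' → y' ≤ 1 →
      f ((k : ℝ) / N, y) 0 ≤ f ((k : ℝ) / N, y') 0)
    (hbd : ∀ k : ℕ, k ≤ N → f ((k : ℝ) / N, 0) 0 < t ∧ t < f ((k : ℝ) / N, 1) 0)
    (hsym : ∀ y : ℝ, 0 ≤ y → y ≤ 1 →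
      f (0, y) 0 = f (1, y) 0 ∧ f (0, y) 1 = f (1, y) 2 ∧ f (0, y) 2 = f (1, y) 1) :
    ∃ p ∈ Set.Icc (0 : ℝ) 1 ×ˢ Set.Icc (0 : ℝ) 1,
      f p = ![t, (1 - t) / 2, (1 - t) / 2] := by
  have hcont := hpa.continuousOn hN
  have hfiber : ∀ x ∈ Icc (0 : ℝ) 1, ∀ j, ContinuousOn (fun y => f (x, y) j) (Icc 0 1) :=
    fun x hx j => (continuousOn_pi.1 hcont j).comp (by fun_prop) fun y hy => ⟨hx, hy⟩
  set Z := Icc (0 : ℝ) 1 ×ˢ Icc (0 : ℝ) 1 ∩ f ⁻¹' {v | v 0 = t}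
  have hZ : IsCompact Z := (isCompact_Icc.prod isCompact_Icc).of_isClosed_subset
    (hcont.preimage_isClosed_of_isClosed (isClosed_Icc.prod isClosed_Icc)
      (isClosed_eq (continuous_apply 0) continuous_const)) inter_subset_left
  have hcross : Icc (0 : ℝ) 1 ⊆ Prod.fst '' Z := fun x hx =>
    let ⟨y, hy, hyt⟩ := hpa.exists_mem_Icc_apply_eq hN hbd hx
    ⟨(x, y), ⟨⟨hx, hy⟩, hyt⟩, rfl⟩
  obtain ⟨⟨_, y₀⟩, ⟨⟨-, hy₀⟩, hy₀t⟩, rfl⟩ := hcross (left_mem_Icc.2 zero_le_one)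
  obtain ⟨e0, e1, e2⟩ := hsym y₀ hy₀.1 hy₀.2
  obtain ⟨x, hx, y₁, y₂, ⟨⟨-, hy₁⟩, ht₁⟩, ⟨⟨-, hy₂⟩, ht₂⟩, hφ₁, hφ₂⟩ :=
    exists_fiber_sign_change isPreconnected_Icc hZ (φ := fun p => f p 1 - f p 2)
      ((continuousOn_pi.1 hcont 1).sub (continuousOn_pi.1 hcont 2) |>.mono inter_subset_left)
      hcross (p := (0, y₀)) (q := (1, y₀)) ⟨⟨left_mem_Icc.2 zero_le_one, hy₀⟩, hy₀t⟩
      ⟨⟨right_mem_Icc.2 zero_le_one, hy₀⟩, e0.symm.trans hy₀t⟩ (left_mem_Icc.2 zero_le_one)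
      (right_mem_Icc.2 zero_le_one) (by simp only [e1, e2, neg_sub])
  obtain ⟨y, hy, hyt, hy12⟩ := exists_eq_and_eq_zero_of_monotoneOn ordConnected_Icc
    (hpa.monotoneOn_fiber hN (fun k hk y hy y' hy' hyy' => hmono k hk y y' hy.1 hyy' hy'.2) hx)
    ((hfiber x hx 1).sub (hfiber x hx 2)) hy₁ hy₂ ht₁ ht₂ hφ₁ hφ₂
  exact ⟨(x, y), ⟨hx, hy⟩, eq_of_mem_stdSimplex (hmem _ ⟨hx, hy⟩) hyt (sub_eq_zero.1 hy12)⟩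

/-- Lemma: existence of a point mapped to `ω = (t, (1−t)/2, (1−t)/2)`.
Fix `N ≥ 1`, `t ∈ (0,1)`, and a `T`-piecewise affine `f : [0,1]² → Δ²` such that: `f` is
vertically monotone at every `x = k/N`; `f₁(v) ≠ t` at every grid vertex; `f₁(k/N, 0) < t <
f₁(k/N, 1)` for every `k ∈ {0,…,N}`; and for every `y ∈ [0,1]`, `f₁(0,y) = f₁(1,y)`,
`f₂(0,y) = f₃(1,y)`, and `f₃(0,y) = f₂(1,y)`. Then some point of `[0,1]²` is mapped by `f`
to `ω`. -/
theorem stmt12 (N : ℕ) (hN : 1 ≤ N) (t : ℝ) (ht : t ∈ Set.Ioo (0 : ℝ) 1)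
    (f : ℝ × ℝ → Fin 3 → ℝ)
    (hpa : IsPWAffine N f)
    (hmem : ∀ p : ℝ × ℝ, p ∈ Set.Icc (0 : ℝ) 1 ×ˢ Set.Icc (0 : ℝ) 1 →
      f p ∈ stdSimplex ℝ (Fin 3))
    (hmono : ∀ k : ℕ, k ≤ N → ∀ y y' : ℝ, 0 ≤ y → y ≤ y' → y' ≤ 1 →
      f ((k : ℝ) / N, y) 0 ≤ f ((k : ℝ) / N, y') 0)
    (hvne : ∀ k l : ℕ, k ≤ N → l ≤ N → f ((k : ℝ) / N, (l : ℝ) / N) 0 ≠ t)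
    (hbd : ∀ k : ℕ, k ≤ N → f ((k : ℝ) / N, 0) 0 < t ∧ t < f ((k : ℝ) / N, 1) 0)
    (hsym : ∀ y : ℝ, 0 ≤ y → y ≤ 1 →
      f (0, y) 0 = f (1, y) 0 ∧ f (0, y) 1 = f (1, y) 2 ∧ f (0, y) 2 = f (1, y) 1) :
    ∃ p ∈ Set.Icc (0 : ℝ) 1 ×ˢ Set.Icc (0 : ℝ) 1,
      f p = ![t, (1 - t) / 2, (1 - t) / 2] :=
  stmt12_general N hN t f hpa hmem hmono hbd hsym
end
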